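/- arXiv:2312.01609 — 9 statements merged into one kernel-verified Lean document; each statement's English description precedes it below -/
import Mathlib

section
/- A point x ∈ ℝ^n is weakly Pareto optimal for the problem of minimizing F = (F₁,…,F_m) if and only if u₀(x) = 0. -/
open Filter

/-- `x` is weakly Pareto optimal (no `z` with `Fᵢ z < Fᵢ x` for all `i`)
iff the merit function `u₀(x) = ⨆_{z} min_{i} (Fᵢ x − Fᵢ z)` (valued in `EReal`)
vanishes at `x`. -/
theorem stmt_1 (n m : ℕ) (hn : 0 < n) (hm : 0 < m)
    (F : Fin m → EuclideanSpace ℝ (Fin n) → ℝ)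
    (x : EuclideanSpace ℝ (Fin n)) :
    (¬ ∃ z : EuclideanSpace ℝ (Fin n), ∀ i : Fin m, F i z < F i x) ↔
      (⨆ z : EuclideanSpace ℝ (Fin n),
        ((⨅ i : Fin m, (F i x - F i z) : ℝ) : EReal)) = 0 := by
  haveI : Nonempty (Fin m) := ⟨⟨0, hm⟩⟩
  have hx : (⨅ i : Fin m, (F i x - F i x) : ℝ) = 0 := by simp
  constructor
  · intro h
    apply le_antisymm
    · apply iSup_le
      intro z
      have hz : ¬ ∀ i : Fin m, F i z < F i x := fun hz => h ⟨z, hz⟩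
      push_neg at hz
      obtain ⟨i, hi⟩ := hz
      have h1 : (⨅ j : Fin m, (F j x - F j z) : ℝ) ≤ F i x - F i z :=
        ciInf_le (Set.Finite.bddBelow (Set.finite_range _)) i
      have h2 : (⨅ j : Fin m, (F j x - F j z) : ℝ) ≤ 0 := h1.trans (by linarith)
      exact_mod_cast h2
    · calc (0 : EReal) = ((⨅ i : Fin m, (F i x - F i x) : ℝ) : EReal) := by rw [hx]; simp
        _ ≤ _ := le_iSup (fun z => ((⨅ i : Fin m, (F i x - F i z) : ℝ) : EReal)) x
  · intro h
    rintro ⟨z, hz⟩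
    obtain ⟨i₀, hi₀⟩ := Finite.exists_min (fun i : Fin m => F i x - F i z)
    have hinf : (⨅ i : Fin m, (F i x - F i z) : ℝ) = F i₀ x - F i₀ z :=
      le_antisymm (ciInf_le (Set.Finite.bddBelow (Set.finite_range _)) i₀)
        (le_ciInf hi₀)
    have hpos : (0:ℝ) < F i₀ x - F i₀ z := by linarith [hz i₀]
    have hle : ((⨅ i : Fin m, (F i x - F i z) : ℝ) : EReal) ≤ 0 := by
      rw [← h]
      exact le_iSup (fun z => ((⨅ i : Fin m, (F i x - F i z) : ℝ) : EReal)) z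
    have : (⨅ i : Fin m, (F i x - F i z) : ℝ) ≤ 0 := by exact_mod_cast hle
    rw [hinf] at this
    linarith
end

section
/- Let p be the unique minimizer over ℝ^n of Q(z) := f(y) + ⟨∇f(y), z − y⟩ + (c/2)‖z − y‖² + g(z). If f(p) ≤ f(y) + ⟨∇f(y), p − y⟩ + (c/2)‖p − y‖², then for every x ∈ ℝ^n one has f(p) + g(p) ≤ f(x) + g(x) + c⟨y − p, y − x⟩ − (c/2)‖p − y‖². -/
open Filter
open scoped RealInnerProductSpace

/-- Gradient inequality for a convex differentiable function. -/
lemma grad_ineq_aux {E : Type*} [NormedAddCommGroup E] [InnerProductSpace ℝ E] [CompleteSpace E]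
    {f : E → ℝ} {v : E} {y : E} (hf : ConvexOn ℝ Set.univ f)
    (h : HasGradientAt f v y) (x : E) : f y + ⟪v, x - y⟫ ≤ f x := by
  have hL : ∀ t : ℝ, HasDerivAt (fun t : ℝ => y + t • (x - y)) (x - y) t := by
    intro t
    simpa using ((hasDerivAt_id t).smul_const (x - y)).const_add y
  have hφ : HasDerivAt (fun t : ℝ => f (y + t • (x - y))) ⟪v, x - y⟫ 0 := by
    have hfd : HasFDerivAt f ((InnerProductSpace.toDual ℝ E) v) (y + (0:ℝ) • (x - y)) := by
      simpa using h.hasFDerivAt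
    have := hfd.comp_hasDerivAt 0 (hL 0)
    simp at this
    exact this
  have hslope := hasDerivAt_iff_tendsto_slope.1 hφ
  have hslope' : Tendsto (slope (fun t : ℝ => f (y + t • (x - y))) 0) (nhdsWithin 0 (Set.Ioi 0))
      (nhds ⟪v, x - y⟫) := hslope.mono_left (nhdsWithin_mono _ (by
    intro t ht
    exact ne_of_gt ht))
  have hbound : ∀ᶠ t in nhdsWithin (0:ℝ) (Set.Ioi 0),
      slope (fun t : ℝ => f (y + t • (x - y))) 0 t ≤ f x - f y := by
    filter_upwards [Ioc_mem_nhdsGT_of_mem (by norm_num : (0:ℝ) ∈ Set.Ico (0:ℝ) 1)]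
      with t ht
    have ht0 : 0 < t := ht.1
    have ht1 : t ≤ 1 := ht.2
    have hconv := hf.2 (Set.mem_univ y) (Set.mem_univ x)
      (by linarith : (0:ℝ) ≤ 1 - t) (le_of_lt ht0) (by ring)
    have hpt : (1 - t) • y + t • x = y + t • (x - y) := by
      module
    simp only [smul_eq_mul] at hconv
    rw [hpt] at hconv
    rw [slope_def_field]
    simp only [sub_zero, zero_smul, add_zero]
    rw [div_le_iff₀ ht0]
    nlinarith [hconv]
  have := le_of_tendsto hslope' hbound
  linarith

/-- Let `f` be convex and differentiable with gradient `f'`, `g` convex,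
`c > 0`, and let `p` be the unique minimizer over `ℝⁿ` of
`Q(z) = f(y) + ⟨∇f(y), z − y⟩ + (c/2)‖z − y‖² + g(z)`.
If `f(p) ≤ f(y) + ⟨∇f(y), p − y⟩ + (c/2)‖p − y‖²`, then for every `x`:
`f(p) + g(p) ≤ f(x) + g(x) + c⟨y − p, y − x⟩ − (c/2)‖p − y‖²`. -/
theorem stmt_5 (n : ℕ) (hn : 0 < n)
    (f g : EuclideanSpace ℝ (Fin n) → ℝ)
    (f' : EuclideanSpace ℝ (Fin n) → EuclideanSpace ℝ (Fin n))
    (hf : ConvexOn ℝ Set.univ f)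
    (hf' : ∀ x, HasGradientAt f (f' x) x)
    (hg : ConvexOn ℝ Set.univ g)
    (y p : EuclideanSpace ℝ (Fin n)) (c : ℝ) (hc : 0 < c)
    (hpmin : ∀ z : EuclideanSpace ℝ (Fin n),
      f y + ⟪f' y, p - y⟫ + c / 2 * ‖p - y‖ ^ 2 + g p ≤
      f y + ⟪f' y, z - y⟫ + c / 2 * ‖z - y‖ ^ 2 + g z)
    (hpuniq : ∀ q : EuclideanSpace ℝ (Fin n),
      (∀ z : EuclideanSpace ℝ (Fin n),
        f y + ⟪f' y, q - y⟫ + c / 2 * ‖q - y‖ ^ 2 + g q ≤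
        f y + ⟪f' y, z - y⟫ + c / 2 * ‖z - y‖ ^ 2 + g z) → q = p)
    (hdesc : f p ≤ f y + ⟪f' y, p - y⟫ + c / 2 * ‖p - y‖ ^ 2) :
    ∀ x : EuclideanSpace ℝ (Fin n),
      f p + g p ≤ f x + g x + c * ⟪y - p, y - x⟫ - c / 2 * ‖p - y‖ ^ 2 := by
  intro x
  -- subgradient-type inequality at the prox point
  set a : ℝ := g x + ⟪f' y, x - p⟫ + c * ⟪p - y, x - p⟫ with ha
  have hgp : g p ≤ a := by
    have key : ∀ t ∈ Set.Ioc (0:ℝ) 1, g p ≤ a + c / 2 * ‖x - p‖ ^ 2 * t := by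
      intro t ht
      have ht0 : 0 < t := ht.1
      have ht1 : t ≤ 1 := ht.2
      have hmin := hpmin (p + t • (x - p))
      have hz : p + t • (x - p) - y = (p - y) + t • (x - p) := by abel
      have hinner : ⟪f' y, (p - y) + t • (x - p)⟫
          = ⟪f' y, p - y⟫ + t * ⟪f' y, x - p⟫ := by
        rw [inner_add_right, real_inner_smul_right]
      have hnorm : ‖(p - y) + t • (x - p)‖ ^ 2
          = ‖p - y‖ ^ 2 + 2 * (t * ⟪p - y, x - p⟫) + t ^ 2 * ‖x - p‖ ^ 2 := by
        rw [norm_add_sq_real, real_inner_smul_right, norm_smul]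
        simp only [abs_of_pos ht0, mul_pow, Real.norm_eq_abs]
      have hconv := hg.2 (Set.mem_univ p) (Set.mem_univ x)
        (by linarith : (0:ℝ) ≤ 1 - t) (le_of_lt ht0) (by ring)
      simp only [smul_eq_mul] at hconv
      have hpt : (1 - t) • p + t • x = p + t • (x - p) := by module
      rw [hpt] at hconv
      rw [hz, hinner, hnorm] at hmin
      have : t * g p ≤ t * (a + c / 2 * ‖x - p‖ ^ 2 * t) := by
        rw [ha]; nlinarith [hmin, hconv]
      exact le_of_mul_le_mul_left (by linarith [this]) ht0
    have htend : Tendsto (fun t : ℝ => a + c / 2 * ‖x - p‖ ^ 2 * t)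
        (nhdsWithin 0 (Set.Ioi 0)) (nhds a) := by
      have h0 : Tendsto (fun t : ℝ => a + c / 2 * ‖x - p‖ ^ 2 * t) (nhds 0)
          (nhds (a + c / 2 * ‖x - p‖ ^ 2 * 0)) :=
        tendsto_const_nhds.add (tendsto_const_nhds.mul tendsto_id)
      simpa using h0.mono_left nhdsWithin_le_nhds
    refine ge_of_tendsto htend ?_
    filter_upwards [Ioc_mem_nhdsGT_of_mem (by norm_num : (0:ℝ) ∈ Set.Ico (0:ℝ) 1)]
      with t ht using key t ht
  have hA : f y + ⟪f' y, x - y⟫ ≤ f x := grad_ineq_aux hf (hf' y) x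
  have e1 : ⟪f' y, x - y⟫ = ⟪f' y, x - p⟫ + ⟪f' y, p - y⟫ := by
    rw [← inner_add_right]
    congr 1
    abel
  have e2 : ⟪p - y, x - p⟫ = ⟪y - p, y - x⟫ - ‖p - y‖ ^ 2 := by
    have h1 : x - p = (x - y) - (p - y) := by abel
    have h2 : ⟪y - p, y - x⟫ = ⟪p - y, x - y⟫ := by
      rw [show y - p = -(p - y) by abel, show y - x = -(x - y) by abel, inner_neg_neg]
    rw [h1, inner_sub_right, h2, real_inner_self_eq_norm_sq]
  have e2' : c * ⟪p - y, x - p⟫ = c * ⟪y - p, y - x⟫ - c * ‖p - y‖ ^ 2 := by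
    rw [e2]; ring
  rw [ha] at hgp
  linarith
end

section
/- Let S be a nonempty subset of ℝ^n and {z_k} a sequence in ℝ^n. Assume (i) for every z ∈ S the limit lim_{k→∞} ‖z_k − z‖ exists, and (ii) every cluster point of the sequence {z_k} belongs to S. Then {z_k} converges to a point of S. -/
open Filter Topology

/-- discrete Opial lemma: Let `S ⊆ ℝⁿ` be nonempty and `{z_k}` a sequence
in `ℝⁿ` such that (i) `lim_k ‖z_k − z‖` exists for every `z ∈ S`, and (ii) every cluster
point (limit of a convergent subsequence) of `{z_k}` belongs to `S`. Then `{z_k}`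
converges to a point of `S`. -/
theorem stmt_7 (n : ℕ) (hn : 0 < n)
    (S : Set (EuclideanSpace ℝ (Fin n))) (hS : S.Nonempty)
    (z : ℕ → EuclideanSpace ℝ (Fin n))
    (h1 : ∀ s ∈ S, ∃ L : ℝ, Tendsto (fun k => ‖z k - s‖) atTop (𝓝 L))
    (h2 : ∀ p : EuclideanSpace ℝ (Fin n),
      (∃ φ : ℕ → ℕ, StrictMono φ ∧ Tendsto (fun k => z (φ k)) atTop (𝓝 p)) → p ∈ S) :
    ∃ p ∈ S, Tendsto z atTop (𝓝 p) := by
  obtain ⟨s, hs⟩ := hS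
  obtain ⟨L0, hL0⟩ := h1 s hs
  -- the sequence is bounded
  have hbdd : BddAbove (Set.range fun k => ‖z k - s‖) := hL0.bddAbove_range
  obtain ⟨M, hM⟩ := hbdd
  have hmem : ∀ k, z k ∈ Metric.closedBall s M := by
    intro k
    rw [Metric.mem_closedBall, dist_eq_norm]
    exact hM ⟨k, rfl⟩
  obtain ⟨p, -, φ, hφ, hφt⟩ :=
    tendsto_subseq_of_bounded Metric.isBounded_closedBall hmem
  have hpS : p ∈ S := h2 p ⟨φ, hφ, hφt⟩
  obtain ⟨L, hL⟩ := h1 p hpS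
  have hsub : Tendsto (fun k => ‖z (φ k) - p‖) atTop (𝓝 0) := by
    have : Tendsto (fun k => z (φ k) - p) atTop (𝓝 (p - p)) := hφt.sub tendsto_const_nhds
    simpa using this.norm
  have hL0' : L = 0 := by
    have := hL.comp hφ.tendsto_atTop
    exact tendsto_nhds_unique this hsub
  refine ⟨p, hpS, ?_⟩
  rw [tendsto_iff_norm_sub_tendsto_zero]
  rwa [hL0'] at hL
end

section
/- Assume α ≥ 3. Let {a_k}_{k≥1} and {ω_k}_{k≥1} be sequences of nonnegative real numbers such that a_{k+1} ≤ ((k − 1)/(k + α − 1)) a_k + ω_k for all k ≥ 1. If Σ_{k=1}^∞ k ω_k < ∞, then Σ_{k=1}^∞ a_k < ∞. -/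
open Filter Topology

/-- Assume `α ≥ 3`. If `{a_k}` and `{ω_k}` are nonnegative sequences with
`a_{k+1} ≤ ((k − 1)/(k + α − 1)) a_k + ω_k` for all `k ≥ 1`, and `∑ k ω_k < ∞`,
then `∑ a_k < ∞`. -/
theorem stmt_8 (α : ℝ) (hα : 3 ≤ α) (a ω : ℕ → ℝ)
    (ha : ∀ k, 0 ≤ a k) (hω : ∀ k, 0 ≤ ω k)
    (hrec : ∀ k : ℕ, 1 ≤ k →
      a (k + 1) ≤ (((k : ℝ) - 1) / ((k : ℝ) + α - 1)) * a k + ω k)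
    (hsum : Summable fun k : ℕ => (k : ℝ) * ω k) :
    Summable a := by
  -- Key telescoped inequality
  have main : ∀ n : ℕ, (n : ℝ) * a (n + 1) + (α - 1) * ∑ k ∈ Finset.range n, a (k + 2)
      ≤ ∑ k ∈ Finset.range n, ((k : ℝ) + α) * ω (k + 1) := by
    intro n
    induction n with
    | zero => simp
    | succ n ih =>
      rw [Finset.sum_range_succ, Finset.sum_range_succ]
      have hd : (0 : ℝ) < (n : ℝ) + α := by
        have : (0:ℝ) ≤ (n:ℝ) := Nat.cast_nonneg n
        linarith
      have h := hrec (n + 1) (by omega)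
      push_cast at h
      have h1 : ((n : ℝ) + α) * a (n + 2) ≤ (n : ℝ) * a (n + 1) + ((n : ℝ) + α) * ω (n + 1) := by
        have h2 : ((n:ℝ) + 1 - 1) / ((n:ℝ) + 1 + α - 1) = (n:ℝ) / ((n:ℝ) + α) := by
          ring_nf
        rw [h2] at h
        have h3 := mul_le_mul_of_nonneg_left h hd.le
        calc ((n : ℝ) + α) * a (n + 2) = ((n:ℝ) + α) * a (n + 1 + 1) := by norm_num
          _ ≤ ((n:ℝ) + α) * ((n:ℝ) / ((n:ℝ) + α) * a (n + 1) + ω (n + 1)) := h3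
          _ = (n : ℝ) * a (n + 1) + ((n : ℝ) + α) * ω (n + 1) := by
              field_simp
      push_cast
      have ha2 : 0 ≤ a (n + 2) := ha _
      nlinarith [ih]
  -- bound partial sums of shifted sequence
  set S := ∑' k : ℕ, (k : ℝ) * ω k with hS
  have hbound : ∀ n : ℕ, ∑ k ∈ Finset.range n, a (k + 2) ≤ α * S / (α - 1) := by
    intro n
    have h1 := main n
    have h2 : ∑ k ∈ Finset.range n, ((k : ℝ) + α) * ω (k + 1)
        ≤ α * ∑ k ∈ Finset.range n, ((k : ℝ) + 1) * ω (k + 1) := by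
      rw [Finset.mul_sum]
      apply Finset.sum_le_sum
      intro k _
      have hk : (0:ℝ) ≤ (k:ℝ) := Nat.cast_nonneg k
      have h5 : 0 ≤ (α - 1) * ((k:ℝ) * ω (k + 1)) :=
        mul_nonneg (by linarith) (mul_nonneg hk (hω (k + 1)))
      nlinarith [hω (k + 1)]
    have h3 : ∑ k ∈ Finset.range n, ((k : ℝ) + 1) * ω (k + 1)
        = ∑ k ∈ Finset.range (n + 1), (k : ℝ) * ω k := by
      rw [Finset.sum_range_succ']
      push_cast
      simp
    have h4 : ∑ k ∈ Finset.range (n + 1), (k : ℝ) * ω k ≤ S :=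
      Summable.sum_le_tsum _ (fun k _ => mul_nonneg (Nat.cast_nonneg k) (hω k)) hsum
    have hn : (0:ℝ) ≤ (n:ℝ) * a (n + 1) := mul_nonneg (Nat.cast_nonneg n) (ha _)
    have hα1 : (0:ℝ) < α - 1 := by linarith
    rw [le_div_iff₀ hα1]
    nlinarith
  have hsum2 : Summable (fun k : ℕ => a (k + 2)) :=
    summable_of_sum_range_le (fun k => ha _) hbound
  exact (summable_nat_add_iff 2).mp hsum2
end

section
/- Assume α ≥ 3. Let {h_k}_{k≥0} be a sequence of nonnegative real numbers and {ω_k}_{k≥1} a sequence of nonnegative real numbers such that (h_{k+1} − h_k)₊ ≤ ((k − 1)/(k + α − 1)) (h_k − h_{k−1})₊ + ω_k for all k ≥ 1. If Σ_{k=1}^∞ k ω_k < ∞, then lim_{k→∞} h_k exists (and is finite). -/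
open Filter Topology

/-- Assume `α ≥ 3`. Let `{h_k}_{k≥0}` and `{ω_k}_{k≥1}` be nonnegative
sequences with `(h_{k+1} − h_k)₊ ≤ ((k − 1)/(k + α − 1)) (h_k − h_{k−1})₊ + ω_k`
for all `k ≥ 1`. If `∑ k ω_k < ∞`, then `lim_{k→∞} h_k` exists (and is finite). -/
theorem stmt_9 (α : ℝ) (hα : 3 ≤ α) (h ω : ℕ → ℝ)
    (hh : ∀ k, 0 ≤ h k) (hω : ∀ k : ℕ, 1 ≤ k → 0 ≤ ω k)
    (hrec : ∀ k : ℕ, 1 ≤ k →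
      max (h (k + 1) - h k) 0 ≤
        (((k : ℝ) - 1) / ((k : ℝ) + α - 1)) * max (h k - h (k - 1)) 0 + ω k)
    (hsum : Summable fun k : ℕ => (k : ℝ) * ω k) :
    ∃ L : ℝ, Tendsto h atTop (𝓝 L) := by
  set δ : ℕ → ℝ := fun k => max (h (k + 1) - h k) 0 with hδdef
  set ν : ℕ → ℝ := fun k => max (h k - h (k + 1)) 0 with hνdef
  have hδ0 : ∀ k, 0 ≤ δ k := fun k => le_max_right _ _
  have hν0 : ∀ k, 0 ≤ ν k := fun k => le_max_right _ _
  -- key inequality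
  have key : ∀ n : ℕ, ((n : ℝ) + α) * δ (n + 1) ≤ (n : ℝ) * δ n + ((n : ℝ) + α) * ω (n + 1) := by
    intro n
    have hpos : (0 : ℝ) < (n : ℝ) + α := by
      have : (0 : ℝ) ≤ n := Nat.cast_nonneg n
      linarith
    have hr := hrec (n + 1) (by omega)
    simp only [Nat.add_sub_cancel] at hr
    push_cast at hr
    have hr' : δ (n + 1) ≤ ((n : ℝ) / ((n : ℝ) + α)) * δ n + ω (n + 1) := by
      have e1 : ((n : ℝ) + 1 - 1) = (n : ℝ) := by ring
      have e2 : ((n : ℝ) + 1 + α - 1) = (n : ℝ) + α := by ring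
      rw [e1, e2] at hr
      exact hr
    have := mul_le_mul_of_nonneg_left hr' hpos.le
    calc ((n : ℝ) + α) * δ (n + 1) ≤ ((n : ℝ) + α) * (((n : ℝ) / ((n : ℝ) + α)) * δ n + ω (n + 1)) := this
      _ = (n : ℝ) * δ n + ((n : ℝ) + α) * ω (n + 1) := by field_simp
  -- the tsum of k ω k and its nonnegativity
  have fnn : ∀ k : ℕ, 0 ≤ (k : ℝ) * ω k := by
    intro k
    rcases Nat.eq_zero_or_pos k with hk | hk
    · simp [hk]
    · exact mul_nonneg (Nat.cast_nonneg k) (hω k hk)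
  set T : ℝ := ∑' k : ℕ, (k : ℝ) * ω k with hT
  have hpartial : ∀ n : ℕ, ∑ k ∈ Finset.range n, ((k : ℝ) + 1) * ω (k + 1) ≤ T := by
    intro n
    have e : ∑ k ∈ Finset.range n, ((k : ℝ) + 1) * ω (k + 1)
        = ∑ k ∈ Finset.range (n + 1), (k : ℝ) * ω k := by
      rw [Finset.sum_range_succ' (fun k => (k : ℝ) * ω k) n]
      push_cast
      simp
    rw [e]
    exact Summable.sum_le_tsum (Finset.range (n + 1)) (fun i _ => fnn i) hsum
  -- telescoped estimate
  have claim : ∀ n : ℕ, ((n : ℝ) + α - 1) * δ n + (α - 1) * ∑ k ∈ Finset.range n, δ k ≤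
      (α - 1) * δ 0 + α * ∑ k ∈ Finset.range n, ((k : ℝ) + 1) * ω (k + 1) := by
    intro n
    induction n with
    | zero => simp
    | succ n ih =>
      have hk := key n
      have hωn : 0 ≤ ω (n + 1) := hω (n + 1) (by omega)
      have hn : (0 : ℝ) ≤ n := Nat.cast_nonneg n
      rw [Finset.sum_range_succ, Finset.sum_range_succ]
      push_cast
      have hδn := hδ0 n
      nlinarith [mul_nonneg hn hωn]
  have hα1 : (0 : ℝ) < α - 1 := by linarith
  -- summability of δ
  have hδsum : Summable δ := by
    apply summable_of_sum_range_le (c := δ 0 + α * T / (α - 1)) hδ0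
    intro n
    have hc := claim n
    have hp := hpartial n
    have hun : 0 ≤ ((n : ℝ) + α - 1) * δ n := by
      have : (0 : ℝ) ≤ n := Nat.cast_nonneg n
      exact mul_nonneg (by linarith) (hδ0 n)
    have h1 : (α - 1) * ∑ k ∈ Finset.range n, δ k ≤ (α - 1) * δ 0 + α * T := by
      nlinarith
    have h2 : (α - 1) * (δ 0 + α * T / (α - 1)) = (α - 1) * δ 0 + α * T := by
      field_simp
    nlinarith [h1, h2]
  -- identity h n + Σν = h 0 + Σδ
  have hid : ∀ n : ℕ, h n + ∑ k ∈ Finset.range n, ν k = h 0 + ∑ k ∈ Finset.range n, δ k := by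
    intro n
    induction n with
    | zero => simp
    | succ n ih =>
      rw [Finset.sum_range_succ, Finset.sum_range_succ]
      have : δ n - ν n = h (n + 1) - h n := by
        simp only [hδdef, hνdef]
        rcases le_total (h n) (h (n + 1)) with hle | hle
        · rw [max_eq_left (by linarith), max_eq_right (by linarith)]; ring
        · rw [max_eq_right (by linarith), max_eq_left (by linarith)]; ring
      linarith
  -- summability of ν
  have hνsum : Summable ν := by
    apply summable_of_sum_range_le (c := h 0 + ∑' k, δ k) hν0
    intro n
    have := hid n
    have hδt : ∑ k ∈ Finset.range n, δ k ≤ ∑' k, δ k :=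
      Summable.sum_le_tsum (Finset.range n) (fun i _ => hδ0 i) hδsum
    have := hh n
    linarith
  refine ⟨h 0 + (∑' k, δ k) - ∑' k, ν k, ?_⟩
  have t1 := hδsum.hasSum.tendsto_sum_nat
  have t2 := hνsum.hasSum.tendsto_sum_nat
  have : Tendsto (fun n => h 0 + ∑ k ∈ Finset.range n, δ k - ∑ k ∈ Finset.range n, ν k)
      atTop (𝓝 (h 0 + (∑' k, δ k) - ∑' k, ν k)) := by
    exact ((tendsto_const_nhds.add t1).sub t2)
  refine this.congr fun n => ?_
  have := hid n
  linarith
end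

section
/- For every k ≥ 1 the energy inequality E_{k+1} + (2(α − 3) γ_{k+1} μ_{k+1}/(α − 1)) (k + α − 1) W_k ≤ E_k holds; consequently the sequence {E_k}_{k≥1} is nonincreasing and lim_{k→∞} E_k exists. -/
open Filter Topology
open scoped RealInnerProductSpace

lemma mvt_log_rpow (σ : ℝ) (hσ : 1/2 < σ) (a : ℝ) (ha : 2 ≤ a) :
    (2*σ - 1) / ((a+1) * Real.log (a+1) ^ (2*σ)) ≤
      Real.log a ^ (1-2*σ) - Real.log (a+1) ^ (1-2*σ) := by
  set g : ℝ → ℝ := fun t => Real.log t ^ (1-2*σ) with hg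
  set g' : ℝ → ℝ := fun t => t⁻¹ * (1-2*σ) * Real.log t ^ (1-2*σ-1) with hg'
  have hderiv : ∀ t ∈ Set.Icc a (a+1), HasDerivAt g (g' t) t := by
    intro t ht
    have ht2 : (2:ℝ) ≤ t := le_trans ha ht.1
    have htpos : (0:ℝ) < t := by linarith
    have hlogpos : 0 < Real.log t := Real.log_pos (by linarith)
    exact (Real.hasDerivAt_log (ne_of_gt htpos)).rpow_const (Or.inl (ne_of_gt hlogpos))
  obtain ⟨c, hc, hceq⟩ := exists_hasDerivAt_eq_slope g g' (by linarith : a < a + 1)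
    (fun t ht => (hderiv t ht).continuousAt.continuousWithinAt)
    (fun t ht => hderiv t (Set.mem_Icc_of_Ioo ht))
  have hc1 : a < c := hc.1
  have hc2 : c < a + 1 := hc.2
  have hcpos : (0:ℝ) < c := by linarith
  have hlogc : 0 < Real.log c := Real.log_pos (by linarith)
  have hloga1 : 0 < Real.log (a+1) := Real.log_pos (by linarith)
  have key : g a - g (a+1) = (2*σ-1) * (c * Real.log c ^ (2*σ))⁻¹ := by
    have h1 : g' c = (g (a+1) - g a) / 1 := by rw [hceq]; ring_nf
    have h2 : g a - g (a+1) = -g' c := by rw [h1]; ring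
    rw [h2]; simp only [hg']
    have h3 : Real.log c ^ (1-2*σ-1) = (Real.log c ^ (2*σ))⁻¹ := by
      rw [show (1-2*σ-1 : ℝ) = -(2*σ) by ring, Real.rpow_neg hlogc.le]
    rw [h3, mul_inv]
    ring
  rw [show Real.log a ^ (1-2*σ) - Real.log (a+1) ^ (1-2*σ) = g a - g (a+1) from rfl, key]
  have h1 : c * Real.log c ^ (2*σ) ≤ (a+1) * Real.log (a+1) ^ (2*σ) := by
    apply mul_le_mul hc2.le (Real.rpow_le_rpow hlogc.le
      (Real.log_le_log hcpos hc2.le) (by linarith)) (Real.rpow_nonneg hlogc.le _) (by linarith)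
  have h2 : 0 < c * Real.log c ^ (2*σ) := mul_pos hcpos (Real.rpow_pos_of_pos hlogc _)
  rw [div_eq_mul_inv]
  apply mul_le_mul_of_nonneg_left _ (by linarith : (0:ℝ) ≤ 2*σ-1)
  exact inv_anti₀ h2 h1

set_option maxHeartbeats 4000000 in
/-- For every `k ≥ 1` the energy inequality
`E_{k+1} + (2(α−3) γ_{k+1} μ_{k+1}/(α−1)) (k+α−1) W_k ≤ E_k` holds; consequently
`{E_k}_{k≥1}` is nonincreasing and `lim_{k→∞} E_k` exists. -/
theorem stmt_10 (n : ℕ) (hn : 0 < n) (α σ μ₀ κ : ℝ)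
    (hα : 3 < α) (hσ : 1 / 2 < σ) (hσ1 : σ ≤ 1) (hμ₀ : 0 < μ₀) (hκ : 0 ≤ κ)
    (γ : ℕ → ℝ) (hγpos : ∀ k, 0 < γ k) (hγanti : Antitone γ)
    (μ : ℕ → ℝ)
    (hμ : ∀ k : ℕ, 1 ≤ k →
      μ k = μ₀ / (((k : ℝ) + α - 2) * Real.log ((k : ℝ) + α - 2) ^ σ))
    (x y : ℕ → EuclideanSpace ℝ (Fin n))
    (hy : ∀ k : ℕ,
      y k = x k + ((((k : ℝ) - 1) / ((k : ℝ) + α - 1)) : ℝ) • (x k - x (k - 1)))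
    (xstar : EuclideanSpace ℝ (Fin n)) (W : ℕ → ℝ) (hW : ∀ k, 0 ≤ W k)
    (hA : ∀ k : ℕ, W (k + 1) ≤ W k
      + (μ (k + 1) * γ (k + 1))⁻¹ * ⟪y k - x (k + 1), y k - x k⟫
      - 1 / 2 * (μ (k + 1) * γ (k + 1))⁻¹ * ‖x (k + 1) - y k‖ ^ 2)
    (hB : ∀ k : ℕ, W (k + 1) ≤
      (μ (k + 1) * γ (k + 1))⁻¹ * ⟪y k - x (k + 1), y k - xstar⟫
      - 1 / 2 * (μ (k + 1) * γ (k + 1))⁻¹ * ‖x (k + 1) - y k‖ ^ 2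
      + 2 * κ * μ (k + 1))
    (u : ℕ → EuclideanSpace ℝ (Fin n))
    (hu : ∀ k : ℕ,
      u k = (1 / (α - 1)) • ((((k : ℝ) + α - 1)) • x (k + 1) - (k : ℝ) • x k))
    (En : ℕ → ℝ)
    (hEn : ∀ k : ℕ, 1 ≤ k →
      En k = (2 * γ k * μ k / (α - 1)) * ((k : ℝ) + α - 2) ^ 2 * W k
        + (α - 1) * ‖u (k - 1) - xstar‖ ^ 2
        + (4 * κ * γ 0 * μ₀ / (2 * σ - 1)) * μ k * ((k : ℝ) + α - 2)
            * Real.log ((k : ℝ) + α - 2) ^ (1 - σ)) :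
    (∀ k : ℕ, 1 ≤ k →
      En (k + 1) + (2 * (α - 3) * γ (k + 1) * μ (k + 1) / (α - 1))
          * ((k : ℝ) + α - 1) * W k ≤ En k) ∧
    (∀ k : ℕ, 1 ≤ k → En (k + 1) ≤ En k) ∧
    (∃ L : ℝ, Tendsto En atTop (𝓝 L)) := by
  have hα1 : (0:ℝ) < α - 1 := by linarith
  have hα1' : (α - 1 : ℝ) ≠ 0 := ne_of_gt hα1
  have h2σ : (0:ℝ) < 2*σ - 1 := by linarith
  have hσ0 : (0:ℝ) ≤ σ := by linarith
  -- positivity of μ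
  have hμpos : ∀ k : ℕ, 1 ≤ k → 0 < μ k := by
    intro k hk
    rw [hμ k hk]
    have hk1 : (1:ℝ) ≤ (k:ℝ) := by exact_mod_cast hk
    have h1 : (1:ℝ) < (k:ℝ) + α - 2 := by linarith
    exact div_pos hμ₀ (mul_pos (by linarith)
      (Real.rpow_pos_of_pos (Real.log_pos h1) σ))
  -- nonnegativity of the energy
  have hnonneg : ∀ k : ℕ, 1 ≤ k → 0 ≤ En k := by
    intro k hk
    rw [hEn k hk]
    have hk1 : (1:ℝ) ≤ (k:ℝ) := by exact_mod_cast hk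
    have h1 : (1:ℝ) ≤ (k:ℝ) + α - 2 := by linarith
    have t1 : 0 ≤ (2 * γ k * μ k / (α - 1)) * ((k : ℝ) + α - 2) ^ 2 * W k := by
      apply mul_nonneg (mul_nonneg _ (sq_nonneg _)) (hW k)
      apply div_nonneg _ hα1.le
      exact mul_nonneg (mul_nonneg (by norm_num) (hγpos k).le) (hμpos k hk).le
    have t2 : 0 ≤ (α - 1) * ‖u (k - 1) - xstar‖ ^ 2 :=
      mul_nonneg hα1.le (sq_nonneg _)
    have t3 : 0 ≤ (4 * κ * γ 0 * μ₀ / (2 * σ - 1)) * μ k * ((k : ℝ) + α - 2)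
        * Real.log ((k : ℝ) + α - 2) ^ (1 - σ) := by
      apply mul_nonneg (mul_nonneg (mul_nonneg _ (hμpos k hk).le) (by linarith))
        (Real.rpow_nonneg (Real.log_nonneg h1) _)
      apply div_nonneg _ h2σ.le
      exact mul_nonneg (mul_nonneg (mul_nonneg (by norm_num) hκ) (hγpos 0).le) hμ₀.le
    linarith
  -- the key energy inequality
  have key : ∀ k : ℕ, 1 ≤ k →
      En (k + 1) + (2 * (α - 3) * γ (k + 1) * μ (k + 1) / (α - 1))
          * ((k : ℝ) + α - 1) * W k ≤ En k := by
    intro k hk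
    obtain ⟨m, rfl⟩ : ∃ m, k = m + 1 := ⟨k - 1, (Nat.succ_pred_eq_of_pos hk).symm⟩
    have hm0 : (0:ℝ) ≤ (m:ℝ) := Nat.cast_nonneg m
    have htpos : (0:ℝ) < (m:ℝ) + α := by linarith
    have ht0 : ((m:ℝ) + α) ≠ 0 := ne_of_gt htpos
    have ht1pos : (0:ℝ) < (m:ℝ) + α - 1 := by linarith
    have hlt : (1:ℝ) < (m:ℝ) + α - 1 := by linarith
    have hlogt : 0 < Real.log ((m:ℝ) + α) := Real.log_pos (by linarith)
    have hlog1 : 0 < Real.log ((m:ℝ) + α - 1) := Real.log_pos hlt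
    -- μ formulas
    have hμ2 : μ (m+1+1) = μ₀ / (((m:ℝ) + α) * Real.log ((m:ℝ) + α) ^ σ) := by
      rw [hμ (m+1+1) (by omega)]
      push_cast
      rw [show ((m:ℝ) + 1 + 1 + α - 2) = (m:ℝ) + α by ring]
    have hμ1 : μ (m+1) = μ₀ / (((m:ℝ) + α - 1) * Real.log ((m:ℝ) + α - 1) ^ σ) := by
      rw [hμ (m+1) (by omega)]
      push_cast
      rw [show ((m:ℝ) + 1 + α - 2) = (m:ℝ) + α - 1 by ring]
    have hμ2pos : 0 < μ (m+1+1) := hμpos (m+1+1) (by omega)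
    have hμ1pos : 0 < μ (m+1) := hμpos (m+1) (by omega)
    have hρ : 0 < μ (m+1+1) * γ (m+1+1) := mul_pos hμ2pos (hγpos _)
    have hρne : (μ (m+1+1) * γ (m+1+1)) ≠ 0 := ne_of_gt hρ
    -- vector identities
    have e2 : (α-1) • (u m - xstar)
        = (((m:ℝ)+1)) • (y (m+1) - x (m+1)) + (α-1) • (y (m+1) - xstar) := by
      rw [hu m, hy (m+1)]
      push_cast
      have hne : ((m:ℝ) + 1 + α - 1) ≠ 0 := by
        intro h; apply ht0; linarith [h]
      match_scalars <;> field_simp <;> ring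
    have e3' : (α-1) • (u (m+1) - xstar)
        = (α-1) • (u m - xstar) + ((m:ℝ)+α) • (x (m+1+1) - y (m+1)) := by
      rw [hu (m+1), hu m, hy (m+1)]
      simp only [Nat.add_sub_cancel]
      push_cast
      have hne : ((m:ℝ) + 1 + α - 1) ≠ 0 := by
        intro h; apply ht0; linarith [h]
      match_scalars <;> field_simp <;> ring
    -- inner product computation
    have flip : ∀ w : EuclideanSpace ℝ (Fin n),
        (⟪w, x (m+1+1) - y (m+1)⟫ : ℝ) = -⟪y (m+1) - x (m+1+1), w⟫ := by
      intro w
      rw [real_inner_comm, show x (m+1+1) - y (m+1) = -(y (m+1) - x (m+1+1))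
        from (neg_sub _ _).symm, inner_neg_left]
    have hinner : (α-1) * (⟪u m - xstar, x (m+1+1) - y (m+1)⟫ : ℝ)
        = -(((m:ℝ)+1) * ⟪y (m+1) - x (m+1+1), y (m+1) - x (m+1)⟫
            + (α-1) * ⟪y (m+1) - x (m+1+1), y (m+1) - xstar⟫) := by
      have h : (⟪(α-1) • (u m - xstar), x (m+1+1) - y (m+1)⟫ : ℝ)
          = ⟪(((m:ℝ)+1)) • (y (m+1) - x (m+1)) + (α-1) • (y (m+1) - xstar),
              x (m+1+1) - y (m+1)⟫ := by rw [e2]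
      rw [real_inner_smul_left, inner_add_left, real_inner_smul_left,
        real_inner_smul_left, flip (y (m+1) - x (m+1)), flip (y (m+1) - xstar)] at h
      rw [h, real_inner_comm (y (m+1) - x (m+1)), real_inner_comm (y (m+1) - xstar)]
      ring
    -- squared-norm identity
    have hsm : ∀ (c : ℝ) (w : EuclideanSpace ℝ (Fin n)), ‖c • w‖^2 = c^2 * ‖w‖^2 := by
      intro c w; rw [norm_smul, mul_pow, Real.norm_eq_abs, sq_abs]
    have hn1 : ‖(α-1) • (u (m+1) - xstar)‖^2
        = ‖(α-1) • (u m - xstar)‖^2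
          + 2 * ⟪(α-1) • (u m - xstar), ((m:ℝ)+α) • (x (m+1+1) - y (m+1))⟫
          + ‖((m:ℝ)+α) • (x (m+1+1) - y (m+1))‖^2 := by
      rw [e3', norm_add_sq_real]
    rw [hsm, hsm, hsm, real_inner_smul_left, real_inner_smul_right] at hn1
    have hid' : (α-1)^2 * ‖u (m+1) - xstar‖^2
        = (α-1)^2 * ‖u m - xstar‖^2
          - 2 * ((m:ℝ)+α) * (((m:ℝ)+1) * ⟪y (m+1) - x (m+1+1), y (m+1) - x (m+1)⟫
              + (α-1) * ⟪y (m+1) - x (m+1+1), y (m+1) - xstar⟫)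
          + ((m:ℝ)+α)^2 * ‖x (m+1+1) - y (m+1)‖^2 := by
      linear_combination hn1 + 2 * ((m:ℝ)+α) * hinner
    -- scalar consequences of (A) and (B)
    have haa : (μ (m+1+1) * γ (m+1+1)) * (W (m+1+1) - W (m+1))
        + ‖x (m+1+1) - y (m+1)‖^2 / 2
        ≤ ⟪y (m+1) - x (m+1+1), y (m+1) - x (m+1)⟫ := by
      have h2 := mul_le_mul_of_nonneg_left (hA (m+1)) hρ.le
      have e : (μ (m+1+1) * γ (m+1+1)) * (W (m+1)
          + (μ (m+1+1) * γ (m+1+1))⁻¹ * ⟪y (m+1) - x (m+1+1), y (m+1) - x (m+1)⟫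
          - 1 / 2 * (μ (m+1+1) * γ (m+1+1))⁻¹ * ‖x (m+1+1) - y (m+1)‖ ^ 2)
          = (μ (m+1+1) * γ (m+1+1)) * W (m+1)
            + ⟪y (m+1) - x (m+1+1), y (m+1) - x (m+1)⟫
            - ‖x (m+1+1) - y (m+1)‖^2 / 2 := by
        field_simp [ne_of_gt (hγpos (m+1+1)), ne_of_gt hμ2pos]
      rw [e] at h2
      linarith
    have hbb : (μ (m+1+1) * γ (m+1+1)) * W (m+1+1)
        + ‖x (m+1+1) - y (m+1)‖^2 / 2
        - 2 * κ * μ (m+1+1) * (μ (m+1+1) * γ (m+1+1))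
        ≤ ⟪y (m+1) - x (m+1+1), y (m+1) - xstar⟫ := by
      have h2 := mul_le_mul_of_nonneg_left (hB (m+1)) hρ.le
      have e : (μ (m+1+1) * γ (m+1+1)) *
          ((μ (m+1+1) * γ (m+1+1))⁻¹ * ⟪y (m+1) - x (m+1+1), y (m+1) - xstar⟫
          - 1 / 2 * (μ (m+1+1) * γ (m+1+1))⁻¹ * ‖x (m+1+1) - y (m+1)‖ ^ 2
          + 2 * κ * μ (m+1+1))
          = ⟪y (m+1) - x (m+1+1), y (m+1) - xstar⟫
            - ‖x (m+1+1) - y (m+1)‖^2 / 2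
            + 2 * κ * μ (m+1+1) * (μ (m+1+1) * γ (m+1+1)) := by
        field_simp [ne_of_gt (hγpos (m+1+1)), ne_of_gt hμ2pos]
      rw [e] at h2
      linarith
    -- the cleared main inequality
    have hI' : (α-1)^2 * ‖u (m+1) - xstar‖^2
        + 2 * (μ (m+1+1) * γ (m+1+1)) * ((m:ℝ)+α)^2 * W (m+1+1)
        ≤ (α-1)^2 * ‖u m - xstar‖^2
          + 2 * (μ (m+1+1) * γ (m+1+1)) * ((m:ℝ)+1) * ((m:ℝ)+α) * W (m+1)
          + 4 * κ * μ (m+1+1) * ((m:ℝ)+α) * (μ (m+1+1) * γ (m+1+1)) * (α-1) := by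
      have hmulA := mul_le_mul_of_nonneg_left haa
        (show (0:ℝ) ≤ 2 * ((m:ℝ)+α) * ((m:ℝ)+1) by nlinarith)
      have hmulB := mul_le_mul_of_nonneg_left hbb
        (show (0:ℝ) ≤ 2 * ((m:ℝ)+α) * (α-1) by nlinarith)
      linarith [hid', hmulA, hmulB]
    -- divided form of the main inequality
    have hineq1 : (α-1) * ‖u (m+1) - xstar‖^2
        + 2 * γ (m+1+1) * μ (m+1+1) / (α-1) * ((m:ℝ)+α)^2 * W (m+1+1)
        ≤ (α-1) * ‖u m - xstar‖^2
          + 2 * (μ (m+1+1) * γ (m+1+1)) / (α-1) * ((m:ℝ)+1) * ((m:ℝ)+α) * W (m+1)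
          + 4 * κ * μ (m+1+1) * ((m:ℝ)+α) * (μ (m+1+1) * γ (m+1+1)) := by
      rw [← mul_le_mul_iff_right₀ hα1]
      have eL : (α-1) * ((α-1) * ‖u (m+1) - xstar‖^2
          + 2 * γ (m+1+1) * μ (m+1+1) / (α-1) * ((m:ℝ)+α)^2 * W (m+1+1))
          = (α-1)^2 * ‖u (m+1) - xstar‖^2
            + 2 * (μ (m+1+1) * γ (m+1+1)) * ((m:ℝ)+α)^2 * W (m+1+1) := by
        field_simp
      have eR : (α-1) * ((α-1) * ‖u m - xstar‖^2
          + 2 * (μ (m+1+1) * γ (m+1+1)) / (α-1) * ((m:ℝ)+1) * ((m:ℝ)+α) * W (m+1)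
          + 4 * κ * μ (m+1+1) * ((m:ℝ)+α) * (μ (m+1+1) * γ (m+1+1)))
          = (α-1)^2 * ‖u m - xstar‖^2
            + 2 * (μ (m+1+1) * γ (m+1+1)) * ((m:ℝ)+1) * ((m:ℝ)+α) * W (m+1)
            + 4 * κ * μ (m+1+1) * ((m:ℝ)+α) * (μ (m+1+1) * γ (m+1+1)) * (α-1) := by
        field_simp
      rw [eL, eR]
      exact hI'
    -- monotonicity of μ and the W-coefficient comparison
    have hμle : μ (m+1+1) ≤ μ (m+1) := by
      rw [hμ1, hμ2]
      apply div_le_div_of_nonneg_left hμ₀.le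
        (mul_pos ht1pos (Real.rpow_pos_of_pos hlog1 σ))
      apply mul_le_mul (by linarith)
        (Real.rpow_le_rpow hlog1.le (Real.log_le_log ht1pos (by linarith)) hσ0)
        (Real.rpow_nonneg hlog1.le σ) htpos.le
    have hII : 2 * (μ (m+1+1) * γ (m+1+1)) / (α-1) * ((m:ℝ)+1) * ((m:ℝ)+α) * W (m+1)
        + 2 * (α-3) * γ (m+1+1) * μ (m+1+1) / (α-1) * ((m:ℝ)+α) * W (m+1)
        ≤ 2 * γ (m+1) * μ (m+1) / (α-1) * ((m:ℝ)+α-1)^2 * W (m+1) := by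
      have hγle : γ (m+1+1) ≤ γ (m+1) := hγanti (by omega)
      have hρle : μ (m+1+1) * γ (m+1+1) ≤ μ (m+1) * γ (m+1) :=
        mul_le_mul hμle hγle (hγpos _).le hμ1pos.le
      have hq : ((m:ℝ)+α) * ((m:ℝ)+α-2) ≤ ((m:ℝ)+α-1)^2 := by nlinarith
      have hc : (μ (m+1+1) * γ (m+1+1)) * (((m:ℝ)+α) * ((m:ℝ)+α-2))
          ≤ (μ (m+1) * γ (m+1)) * ((m:ℝ)+α-1)^2 := by
        calc (μ (m+1+1) * γ (m+1+1)) * (((m:ℝ)+α) * ((m:ℝ)+α-2))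
            ≤ (μ (m+1+1) * γ (m+1+1)) * ((m:ℝ)+α-1)^2 :=
              mul_le_mul_of_nonneg_left hq hρ.le
          _ ≤ (μ (m+1) * γ (m+1)) * ((m:ℝ)+α-1)^2 :=
              mul_le_mul_of_nonneg_right hρle (sq_nonneg _)
      have hc2 := mul_le_mul_of_nonneg_left hc
        (show (0:ℝ) ≤ 2 * W (m+1) / (α-1) by
          apply div_nonneg _ hα1.le; linarith [hW (m+1)])
      rw [← mul_le_mul_iff_right₀ hα1]
      have eL : (α-1) * (2 * (μ (m+1+1) * γ (m+1+1)) / (α-1) * ((m:ℝ)+1) * ((m:ℝ)+α) * W (m+1)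
          + 2 * (α-3) * γ (m+1+1) * μ (m+1+1) / (α-1) * ((m:ℝ)+α) * W (m+1))
          = 2 * W (m+1) * ((μ (m+1+1) * γ (m+1+1)) * (((m:ℝ)+α) * ((m:ℝ)+α-2))) := by
        field_simp; ring
      have eR : (α-1) * (2 * γ (m+1) * μ (m+1) / (α-1) * ((m:ℝ)+α-1)^2 * W (m+1))
          = 2 * W (m+1) * ((μ (m+1) * γ (m+1)) * ((m:ℝ)+α-1)^2) := by
        field_simp
      rw [eL, eR]
      have := mul_le_mul_of_nonneg_left hc (show (0:ℝ) ≤ 2 * W (m+1) by linarith [hW (m+1)])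
      linarith
    -- the κ-term comparison (III)
    have hIII : 4 * κ * μ (m+1+1) * ((m:ℝ)+α) * (μ (m+1+1) * γ (m+1+1))
        + (4 * κ * γ 0 * μ₀ / (2 * σ - 1)) * μ (m+1+1) * ((m:ℝ)+α)
            * Real.log ((m:ℝ)+α) ^ (1-σ)
        ≤ (4 * κ * γ 0 * μ₀ / (2 * σ - 1)) * μ (m+1) * ((m:ℝ)+α-1)
            * Real.log ((m:ℝ)+α-1) ^ (1-σ) := by
      have hLt := Real.rpow_pos_of_pos hlogt σ
      have hL1 := Real.rpow_pos_of_pos hlog1 σ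
      have e4 : 4 * κ * μ (m+1+1) * ((m:ℝ)+α) * (μ (m+1+1) * γ (m+1+1))
          = 4 * κ * γ (m+1+1) * μ₀^2 * (((m:ℝ)+α) * Real.log ((m:ℝ)+α) ^ (2*σ))⁻¹ := by
        rw [hμ2, show (2*σ:ℝ) = σ + σ by ring, Real.rpow_add hlogt]
        field_simp
      have e5 : (4 * κ * γ 0 * μ₀ / (2 * σ - 1)) * μ (m+1+1) * ((m:ℝ)+α)
            * Real.log ((m:ℝ)+α) ^ (1-σ)
          = (4 * κ * γ 0 * μ₀ / (2 * σ - 1)) * μ₀ * Real.log ((m:ℝ)+α) ^ (1-2*σ) := by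
        have hsplit : Real.log ((m:ℝ)+α) ^ (1-σ)
            = Real.log ((m:ℝ)+α) ^ (1-2*σ) * Real.log ((m:ℝ)+α) ^ σ := by
          rw [← Real.rpow_add hlogt]; congr 1; ring
        rw [hμ2, hsplit]
        field_simp
      have e6 : (4 * κ * γ 0 * μ₀ / (2 * σ - 1)) * μ (m+1) * ((m:ℝ)+α-1)
            * Real.log ((m:ℝ)+α-1) ^ (1-σ)
          = (4 * κ * γ 0 * μ₀ / (2 * σ - 1)) * μ₀ * Real.log ((m:ℝ)+α-1) ^ (1-2*σ) := by
        have hsplit : Real.log ((m:ℝ)+α-1) ^ (1-σ)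
            = Real.log ((m:ℝ)+α-1) ^ (1-2*σ) * Real.log ((m:ℝ)+α-1) ^ σ := by
          rw [← Real.rpow_add hlog1]; congr 1; ring
        rw [hμ1, hsplit]
        field_simp
      rw [e4, e5, e6]
      have hmvt := mvt_log_rpow σ hσ ((m:ℝ)+α-1) (by linarith)
      rw [show ((m:ℝ)+α-1+1) = (m:ℝ)+α by ring] at hmvt
      have hden : (0:ℝ) < ((m:ℝ)+α) * Real.log ((m:ℝ)+α) ^ (2*σ) :=
        mul_pos htpos (Real.rpow_pos_of_pos hlogt _)
      have hcs : (0:ℝ) ≤ (4 * κ * γ 0 * μ₀ / (2 * σ - 1)) * μ₀ := by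
        apply mul_nonneg (div_nonneg _ h2σ.le) hμ₀.le
        exact mul_nonneg (mul_nonneg (mul_nonneg (by norm_num) hκ) (hγpos 0).le) hμ₀.le
      have h8 := mul_le_mul_of_nonneg_left hmvt hcs
      have h7 : 4 * κ * γ (m+1+1) * μ₀^2 * (((m:ℝ)+α) * Real.log ((m:ℝ)+α) ^ (2*σ))⁻¹
          ≤ (4 * κ * γ 0 * μ₀ / (2 * σ - 1)) * μ₀
            * ((2*σ - 1) / (((m:ℝ)+α) * Real.log ((m:ℝ)+α) ^ (2*σ))) := by
        have heq : (4 * κ * γ 0 * μ₀ / (2 * σ - 1)) * μ₀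
            * ((2*σ - 1) / (((m:ℝ)+α) * Real.log ((m:ℝ)+α) ^ (2*σ)))
            = 4 * κ * γ 0 * μ₀^2 * (((m:ℝ)+α) * Real.log ((m:ℝ)+α) ^ (2*σ))⁻¹ := by
          field_simp
        rw [heq]
        have hγle0 : γ (m+1+1) ≤ γ 0 := hγanti (Nat.zero_le _)
        have hfac : (0:ℝ) ≤ 4 * κ * μ₀^2 * (((m:ℝ)+α) * Real.log ((m:ℝ)+α) ^ (2*σ))⁻¹ := by
          apply mul_nonneg _ (inv_nonneg.mpr hden.le)
          exact mul_nonneg (mul_nonneg (by norm_num) hκ) (sq_nonneg μ₀)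
        linarith [mul_le_mul_of_nonneg_left hγle0 hfac]
      have h8' : (4 * κ * γ 0 * μ₀ / (2 * σ - 1)) * μ₀
            * ((2*σ - 1) / (((m:ℝ)+α) * Real.log ((m:ℝ)+α) ^ (2*σ)))
          ≤ (4 * κ * γ 0 * μ₀ / (2 * σ - 1)) * μ₀
            * (Real.log ((m:ℝ)+α-1) ^ (1-2*σ) - Real.log ((m:ℝ)+α) ^ (1-2*σ)) := h8
      linarith [h7, h8']
    -- assemble
    rw [hEn (m+1+1) (by omega), hEn (m+1) (by omega)]
    simp only [Nat.add_sub_cancel]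
    push_cast
    rw [show ((m:ℝ) + 1 + 1 + α - 2) = (m:ℝ) + α by ring,
      show ((m:ℝ) + 1 + α - 2) = (m:ℝ) + α - 1 by ring,
      show ((m:ℝ) + 1 + α - 1) = (m:ℝ) + α by ring]
    linarith [hineq1, hII, hIII]
  refine ⟨key, ?_, ?_⟩
  · intro k hk
    have hk1 : (0:ℝ) ≤ (k:ℝ) := Nat.cast_nonneg k
    have hextra : 0 ≤ (2 * (α - 3) * γ (k + 1) * μ (k + 1) / (α - 1))
        * ((k : ℝ) + α - 1) * W k := by
      apply mul_nonneg (mul_nonneg _ (by linarith)) (hW k)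
      apply div_nonneg _ hα1.le
      exact mul_nonneg (mul_nonneg (by linarith : (0:ℝ) ≤ 2*(α-3)) (hγpos (k+1)).le) (hμpos (k+1) (by omega)).le
    linarith [key k hk]
  · have hanti : Antitone (fun j : ℕ => En (j + 1)) := by
      apply antitone_nat_of_succ_le
      intro j
      have hextra : 0 ≤ (2 * (α - 3) * γ (j + 1 + 1) * μ (j + 1 + 1) / (α - 1))
          * (((j:ℕ) + 1 : ℝ) + α - 1) * W (j + 1) := by
        have hk1 : (0:ℝ) ≤ ((j:ℕ) + 1 : ℝ) := by positivity
        apply mul_nonneg (mul_nonneg _ (by push_cast; linarith [Nat.cast_nonneg (α := ℝ) j])) (hW (j+1))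
        apply div_nonneg _ hα1.le
        exact mul_nonneg (mul_nonneg (by linarith : (0:ℝ) ≤ 2*(α-3)) (hγpos (j+1+1)).le) (hμpos (j+1+1) (by omega)).le
      have := key (j+1) (by omega)
      push_cast at this hextra ⊢
      linarith
    have hbdd : BddBelow (Set.range (fun j : ℕ => En (j + 1))) := by
      refine ⟨0, ?_⟩
      rintro z ⟨j, rfl⟩
      exact hnonneg (j+1) (by omega)
    exact ⟨_, (Filter.tendsto_add_atTop_iff_nat 1).mp (tendsto_atTop_ciInf hanti hbdd)⟩
end

section
/- The series Σ_{k=1}^∞ μ_k γ_k (k + α − 2) W_k converges. -/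
open Filter Topology

lemma bertrand_aux (b p : ℝ) (hb : 2 ≤ b) (hp : 1 < p) :
    Summable (fun k : ℕ => 1 / (((k : ℝ) + b) * Real.log ((k : ℝ) + b) ^ p)) := by
  have hp0 : 0 ≤ p := by linarith
  have hpos : ∀ k : ℕ, 0 < ((k : ℝ) + b) * Real.log ((k : ℝ) + b) ^ p := by
    intro k
    have h0 : (0:ℝ) ≤ (k : ℝ) := Nat.cast_nonneg k
    have hlog : 0 < Real.log ((k : ℝ) + b) := Real.log_pos (by linarith)
    exact mul_pos (by linarith) (Real.rpow_pos_of_pos hlog p)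
  have hnn : ∀ k : ℕ, 0 ≤ 1 / (((k : ℝ) + b) * Real.log ((k : ℝ) + b) ^ p) :=
    fun k => le_of_lt (one_div_pos.mpr (hpos k))
  have hmono : ∀ ⦃m n : ℕ⦄, 0 < m → m ≤ n →
      1 / (((n : ℝ) + b) * Real.log ((n : ℝ) + b) ^ p)
        ≤ 1 / (((m : ℝ) + b) * Real.log ((m : ℝ) + b) ^ p) := by
    intro m n _ hmn
    have h0m : (0:ℝ) ≤ (m : ℝ) := Nat.cast_nonneg m
    have h1 : (m : ℝ) + b ≤ (n : ℝ) + b := by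
      have : (m : ℝ) ≤ (n : ℝ) := Nat.cast_le.mpr hmn
      linarith
    have hlm : 0 ≤ Real.log ((m : ℝ) + b) := Real.log_nonneg (by linarith)
    apply one_div_le_one_div_of_le (hpos m)
    exact mul_le_mul h1
      (Real.rpow_le_rpow hlm (Real.log_le_log (by linarith) h1) hp0)
      (Real.rpow_nonneg hlm p) (by linarith)
  rw [← summable_condensed_iff_of_nonneg hnn hmono]
  rw [← summable_nat_add_iff 1]
  have hlog2 : (0:ℝ) < Real.log 2 := Real.log_pos (by norm_num)
  have hg : Summable (fun n : ℕ => (Real.log 2 ^ p)⁻¹ * (1 / ((n : ℝ) + 1) ^ p)) := by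
    apply Summable.mul_left
    have h1 := (Real.summable_one_div_nat_rpow (p := p)).mpr hp
    have h2 := (summable_nat_add_iff (f := fun n : ℕ => 1 / (n : ℝ) ^ p) 1).mpr h1
    refine h2.congr fun n => ?_
    push_cast
    ring
  apply Summable.of_nonneg_of_le _ _ hg
  · intro n
    have := hnn (2 ^ (n + 1))
    positivity
  · intro n
    have hcast : ((2 ^ (n + 1) : ℕ) : ℝ) = (2 : ℝ) ^ (n + 1) := by push_cast; ring
    have h2n : (0:ℝ) < (2:ℝ) ^ (n + 1) := by positivity
    have hble : (2:ℝ) ^ (n + 1) ≤ ((2 ^ (n + 1) : ℕ) : ℝ) + b := by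
      rw [hcast]; linarith
    have hlogle : ((n : ℝ) + 1) * Real.log 2 ≤ Real.log (((2 ^ (n + 1) : ℕ) : ℝ) + b) := by
      have h1 : Real.log ((2:ℝ) ^ (n + 1)) = ((n : ℝ) + 1) * Real.log 2 := by
        rw [Real.log_pow]; push_cast; ring
      rw [← h1]
      exact Real.log_le_log h2n hble
    have hlnn : (0:ℝ) ≤ ((n : ℝ) + 1) * Real.log 2 := by positivity
    have hkey : (2:ℝ) ^ (n + 1) * ((((n : ℝ) + 1) * Real.log 2) ^ p)
        ≤ (((2 ^ (n + 1) : ℕ) : ℝ) + b) * Real.log (((2 ^ (n + 1) : ℕ) : ℝ) + b) ^ p := by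
      have h0b : (0:ℝ) ≤ ((2 ^ (n + 1) : ℕ) : ℝ) + b := by positivity
      exact mul_le_mul hble (Real.rpow_le_rpow hlnn hlogle hp0)
        (Real.rpow_nonneg hlnn p) h0b
    have hq : (0:ℝ) < (((n : ℝ) + 1) * Real.log 2) ^ p :=
      Real.rpow_pos_of_pos (by positivity) p
    calc (2:ℝ) ^ (n+1) * (1 / ((((2 ^ (n + 1) : ℕ) : ℝ) + b) * Real.log (((2 ^ (n + 1) : ℕ) : ℝ) + b) ^ p))
        ≤ (2:ℝ) ^ (n+1) * (1 / ((2:ℝ) ^ (n + 1) * ((((n : ℝ) + 1) * Real.log 2) ^ p))) := by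
          apply mul_le_mul_of_nonneg_left _ (le_of_lt h2n)
          exact one_div_le_one_div_of_le (by positivity) hkey
      _ = (((((n : ℝ) + 1)) * Real.log 2) ^ p)⁻¹ := by
          field_simp
      _ = (Real.log 2 ^ p)⁻¹ * (1 / ((n : ℝ) + 1) ^ p) := by
          rw [Real.mul_rpow (by positivity) (le_of_lt hlog2)]
          field_simp
open scoped RealInnerProductSpace

set_option maxHeartbeats 1000000

/-- The series `∑_{k≥1} μ_k γ_k (k + α − 2) W_k` converges. -/
theorem stmt_11 (n : ℕ) (hn : 0 < n) (α σ μ₀ κ : ℝ)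
    (hα : 3 < α) (hσ : 1 / 2 < σ) (hσ1 : σ ≤ 1) (hμ₀ : 0 < μ₀) (hκ : 0 ≤ κ)
    (γ : ℕ → ℝ) (hγpos : ∀ k, 0 < γ k) (hγanti : Antitone γ)
    (μ : ℕ → ℝ)
    (hμ : ∀ k : ℕ, 1 ≤ k →
      μ k = μ₀ / (((k : ℝ) + α - 2) * Real.log ((k : ℝ) + α - 2) ^ σ))
    (x y : ℕ → EuclideanSpace ℝ (Fin n))
    (hy : ∀ k : ℕ,
      y k = x k + ((((k : ℝ) - 1) / ((k : ℝ) + α - 1)) : ℝ) • (x k - x (k - 1)))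
    (xstar : EuclideanSpace ℝ (Fin n)) (W : ℕ → ℝ) (hW : ∀ k, 0 ≤ W k)
    (hA : ∀ k : ℕ, W (k + 1) ≤ W k
      + (μ (k + 1) * γ (k + 1))⁻¹ * ⟪y k - x (k + 1), y k - x k⟫
      - 1 / 2 * (μ (k + 1) * γ (k + 1))⁻¹ * ‖x (k + 1) - y k‖ ^ 2)
    (hB : ∀ k : ℕ, W (k + 1) ≤
      (μ (k + 1) * γ (k + 1))⁻¹ * ⟪y k - x (k + 1), y k - xstar⟫
      - 1 / 2 * (μ (k + 1) * γ (k + 1))⁻¹ * ‖x (k + 1) - y k‖ ^ 2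
      + 2 * κ * μ (k + 1)) :
    Summable (fun k : ℕ => μ k * γ k * ((k : ℝ) + α - 2) * W k) := by
  -- basic positivity
  have hσ0 : 0 ≤ σ := by linarith
  have hμpos : ∀ k : ℕ, 1 ≤ k → 0 < μ k := by
    intro k hk
    have hk1 : (1:ℝ) ≤ (k:ℝ) := by exact_mod_cast hk
    rw [hμ k hk]
    have hd1 : (1:ℝ) < (k:ℝ) + α - 2 := by linarith
    exact div_pos hμ₀ (mul_pos (by linarith)
      (Real.rpow_pos_of_pos (Real.log_pos hd1) σ))
  -- the auxiliary momentum vector and Lyapunov energy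
  set u : ℕ → EuclideanSpace ℝ (Fin n) :=
    fun k => ((k : ℝ) - 1) • (x k - x (k - 1)) + (α - 1) • (x k - xstar) with hu
  set D : ℕ → ℝ :=
    fun k => μ k * γ k * ((k : ℝ) + α - 2) ^ 2 * W k + ‖u k‖ ^ 2 / 2 with hD
  -- decay of μ_{k+1} (k+α-1) relative to μ_k (k+α-2)
  have hμc : ∀ k : ℕ, 1 ≤ k →
      μ (k + 1) * ((k : ℝ) + α - 1) ≤ μ k * ((k : ℝ) + α - 2) := by
    intro k hk
    have hk1 : (1:ℝ) ≤ (k:ℝ) := by exact_mod_cast hk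
    have hd1 : (1:ℝ) < (k:ℝ) + α - 2 := by linarith
    have hc1 : (1:ℝ) < (k:ℝ) + α - 1 := by linarith
    have hld : 0 < Real.log ((k:ℝ) + α - 2) := Real.log_pos hd1
    have hlc : 0 < Real.log ((k:ℝ) + α - 1) := Real.log_pos hc1
    have hcast : ((k + 1 : ℕ) : ℝ) + α - 2 = (k:ℝ) + α - 1 := by push_cast; ring
    rw [hμ k hk, hμ (k + 1) (by omega), hcast]
    have e1 : μ₀ / (((k:ℝ) + α - 1) * Real.log ((k:ℝ) + α - 1) ^ σ) * ((k:ℝ) + α - 1)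
        = μ₀ / Real.log ((k:ℝ) + α - 1) ^ σ := by
      rw [div_mul_eq_mul_div, mul_comm μ₀ ((k:ℝ) + α - 1),
        mul_div_mul_left μ₀ (Real.log ((k:ℝ) + α - 1) ^ σ) (by linarith : ((k:ℝ) + α - 1) ≠ 0)]
    have e2 : μ₀ / (((k:ℝ) + α - 2) * Real.log ((k:ℝ) + α - 2) ^ σ) * ((k:ℝ) + α - 2)
        = μ₀ / Real.log ((k:ℝ) + α - 2) ^ σ := by
      rw [div_mul_eq_mul_div, mul_comm μ₀ ((k:ℝ) + α - 2),
        mul_div_mul_left μ₀ (Real.log ((k:ℝ) + α - 2) ^ σ) (by linarith : ((k:ℝ) + α - 2) ≠ 0)]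
    rw [e1, e2]
    apply div_le_div_of_nonneg_left hμ₀.le (Real.rpow_pos_of_pos hld σ)
    exact Real.rpow_le_rpow hld.le (Real.log_le_log (by linarith) (by linarith)) hσ0
  -- key one-step Lyapunov inequality
  have key : ∀ k : ℕ, 1 ≤ k →
      (α - 2) * (μ k * γ k * ((k : ℝ) + α - 2) * W k) + D (k + 1)
        ≤ D k + (2 * (α - 1) * κ) *
            (μ (k + 1) * μ (k + 1) * γ (k + 1) * ((k : ℝ) + α - 1)) := by
    intro k hk
    have hk1 : (1:ℝ) ≤ (k:ℝ) := by exact_mod_cast hk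
    have hc0 : (0:ℝ) < (k:ℝ) + α - 1 := by linarith
    have hcne : ((k : ℝ) + α - 1) ≠ 0 := ne_of_gt hc0
    have hm : 0 < μ (k + 1) * γ (k + 1) :=
      mul_pos (hμpos (k + 1) (by omega)) (hγpos (k + 1))
    have hmne : (μ (k + 1) * γ (k + 1)) ≠ 0 := ne_of_gt hm
    -- vector identities
    have hu1 : (k : ℝ) • (y k - x k) + (α - 1) • (y k - xstar) = u k := by
      simp only [hu]
      rw [hy k]
      match_scalars <;> field_simp <;> ring
    have hu2 : u (k + 1) = u k - ((k : ℝ) + α - 1) • (y k - x (k + 1)) := by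
      simp only [hu, Nat.add_sub_cancel]
      rw [hy k]
      push_cast
      match_scalars <;> field_simp <;> ring
    -- inner-product expansion
    have hip : ⟪u k, y k - x (k + 1)⟫
        = (k : ℝ) * ⟪y k - x (k + 1), y k - x k⟫
          + (α - 1) * ⟪y k - x (k + 1), y k - xstar⟫ := by
      rw [← hu1, inner_add_left, real_inner_smul_left, real_inner_smul_left,
        real_inner_comm (y k - x k), real_inner_comm (y k - xstar)]
    have hexp : ‖u (k + 1)‖ ^ 2
        = ‖u k‖ ^ 2
          - 2 * (((k : ℝ) + α - 1) * ((k : ℝ) * ⟪y k - x (k + 1), y k - x k⟫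
              + (α - 1) * ⟪y k - x (k + 1), y k - xstar⟫))
          + ((k : ℝ) + α - 1) ^ 2 * ‖y k - x (k + 1)‖ ^ 2 := by
      rw [hu2, norm_sub_sq_real, real_inner_smul_right, hip, norm_smul]
      rw [Real.norm_eq_abs, mul_pow, sq_abs]
    -- scalars from hypotheses A and B
    have hq : ‖x (k + 1) - y k‖ = ‖y k - x (k + 1)‖ := norm_sub_rev _ _
    have hA' := hA k
    have hB' := hB k
    rw [hq] at hA' hB'
    have hA2 : μ (k + 1) * γ (k + 1) * W (k + 1)
        ≤ μ (k + 1) * γ (k + 1) * W k + ⟪y k - x (k + 1), y k - x k⟫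
          - ‖y k - x (k + 1)‖ ^ 2 / 2 := by
      have h := mul_le_mul_of_nonneg_left hA' hm.le
      have heq : μ (k + 1) * γ (k + 1) * (W k
          + (μ (k + 1) * γ (k + 1))⁻¹ * ⟪y k - x (k + 1), y k - x k⟫
          - 1 / 2 * (μ (k + 1) * γ (k + 1))⁻¹ * ‖y k - x (k + 1)‖ ^ 2)
          = μ (k + 1) * γ (k + 1) * W k + ⟪y k - x (k + 1), y k - x k⟫
            - ‖y k - x (k + 1)‖ ^ 2 / 2 := by
        have hinv : μ (k + 1) * γ (k + 1) * (μ (k + 1) * γ (k + 1))⁻¹ = 1 := mul_inv_cancel₀ hmne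
        linear_combination (⟪y k - x (k + 1), y k - x k⟫ - ‖y k - x (k + 1)‖ ^ 2 / 2) * hinv
      linarith [h, heq.le, heq.ge]
    have hB2 : μ (k + 1) * γ (k + 1) * W (k + 1)
        ≤ ⟪y k - x (k + 1), y k - xstar⟫ - ‖y k - x (k + 1)‖ ^ 2 / 2
          + 2 * κ * μ (k + 1) * (μ (k + 1) * γ (k + 1)) := by
      have h := mul_le_mul_of_nonneg_left hB' hm.le
      have heq : μ (k + 1) * γ (k + 1) *
          ((μ (k + 1) * γ (k + 1))⁻¹ * ⟪y k - x (k + 1), y k - xstar⟫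
          - 1 / 2 * (μ (k + 1) * γ (k + 1))⁻¹ * ‖y k - x (k + 1)‖ ^ 2
          + 2 * κ * μ (k + 1))
          = ⟪y k - x (k + 1), y k - xstar⟫ - ‖y k - x (k + 1)‖ ^ 2 / 2
            + 2 * κ * μ (k + 1) * (μ (k + 1) * γ (k + 1)) := by
        have hinv : μ (k + 1) * γ (k + 1) * (μ (k + 1) * γ (k + 1))⁻¹ = 1 := mul_inv_cancel₀ hmne
        linear_combination (⟪y k - x (k + 1), y k - xstar⟫ - ‖y k - x (k + 1)‖ ^ 2 / 2) * hinv
      linarith [h, heq.le, heq.ge]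
    -- multiply and combine
    have hcomb1 := mul_le_mul_of_nonneg_left hA2
      (mul_nonneg hc0.le (Nat.cast_nonneg k) :
        (0:ℝ) ≤ ((k : ℝ) + α - 1) * (k : ℝ))
    have hcomb2 := mul_le_mul_of_nonneg_left hB2
      (mul_nonneg hc0.le (by linarith : (0:ℝ) ≤ α - 1) :
        (0:ℝ) ≤ ((k : ℝ) + α - 1) * (α - 1))
    -- weight comparison
    have hW1 : μ (k + 1) * γ (k + 1) * ((k : ℝ) + α - 1) * ((k : ℝ) * W k)
        ≤ μ k * γ k * ((k : ℝ) + α - 2) * ((k : ℝ) * W k) := by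
      have h1 : μ (k + 1) * γ (k + 1) * ((k : ℝ) + α - 1)
          ≤ μ k * γ k * ((k : ℝ) + α - 2) := by
        have hγ : γ (k + 1) ≤ γ k := hγanti (Nat.le_succ k)
        have := hμc k hk
        calc μ (k + 1) * γ (k + 1) * ((k : ℝ) + α - 1)
            = (μ (k + 1) * ((k : ℝ) + α - 1)) * γ (k + 1) := by ring
          _ ≤ (μ k * ((k : ℝ) + α - 2)) * γ k := by
              apply mul_le_mul this hγ (hγpos (k + 1)).le
              exact mul_nonneg (hμpos k hk).le (by linarith)
          _ = μ k * γ k * ((k : ℝ) + α - 2) := by ring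
      exact mul_le_mul_of_nonneg_right h1
        (mul_nonneg (Nat.cast_nonneg k) (hW k))
    -- unfold D
    have hDk1 : D (k + 1) = μ (k + 1) * γ (k + 1) * ((k : ℝ) + α - 1) ^ 2 * W (k + 1)
        + ‖u (k + 1)‖ ^ 2 / 2 := by
      simp only [hD]
      push_cast
      ring_nf
    have hDk : D k = μ k * γ k * ((k : ℝ) + α - 2) ^ 2 * W k + ‖u k‖ ^ 2 / 2 := rfl
    rw [hDk1, hDk]
    linarith [hcomb1, hcomb2, hexp, hW1]
  -- the error series
  set E : ℕ → ℝ := fun k => μ (k + 1) * μ (k + 1) * γ (k + 1) * ((k : ℝ) + α - 1) with hE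
  have hEnn : ∀ k : ℕ, 0 ≤ E k := by
    intro k
    have h0 : (0:ℝ) ≤ (k : ℝ) := Nat.cast_nonneg k
    have h1 := (hμpos (k + 1) (by omega)).le
    exact mul_nonneg (mul_nonneg (mul_nonneg h1 h1) (hγpos (k + 1)).le) (by linarith)
  have hEsum : Summable E := by
    have hbert := bertrand_aux (α - 1) (2 * σ) (by linarith) (by linarith)
    apply Summable.of_nonneg_of_le hEnn _ (hbert.mul_left (μ₀ ^ 2 * γ 0))
    intro k
    have h0 : (0:ℝ) ≤ (k : ℝ) := Nat.cast_nonneg k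
    have hc1 : (1:ℝ) < (k : ℝ) + α - 1 := by linarith
    have hc0 : (0:ℝ) < (k : ℝ) + α - 1 := by linarith
    have hlc : 0 < Real.log ((k : ℝ) + α - 1) := Real.log_pos hc1
    have hLpos : 0 < Real.log ((k : ℝ) + α - 1) ^ σ := Real.rpow_pos_of_pos hlc σ
    have hL2pos : 0 < Real.log ((k : ℝ) + α - 1) ^ (2 * σ) := Real.rpow_pos_of_pos hlc _
    have hLL : Real.log ((k : ℝ) + α - 1) ^ σ * Real.log ((k : ℝ) + α - 1) ^ σ
        = Real.log ((k : ℝ) + α - 1) ^ (2 * σ) := by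
      rw [← Real.rpow_add hlc, two_mul]
    have hcast : ((k + 1 : ℕ) : ℝ) + α - 2 = (k : ℝ) + α - 1 := by push_cast; ring
    have hμval : μ (k + 1) = μ₀ / (((k : ℝ) + α - 1) * Real.log ((k : ℝ) + α - 1) ^ σ) := by
      rw [hμ (k + 1) (by omega), hcast]
    have heq : E k = γ (k + 1) *
        (μ₀ ^ 2 * (1 / (((k : ℝ) + α - 1) * Real.log ((k : ℝ) + α - 1) ^ (2 * σ)))) := by
      simp only [hE]
      rw [hμval]
      rw [← hLL]
      field_simp
    rw [heq]
    have hposfac : 0 ≤ μ₀ ^ 2 * (1 / (((k : ℝ) + α - 1) * Real.log ((k : ℝ) + α - 1) ^ (2 * σ))) := by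
      have : 0 < ((k : ℝ) + α - 1) * Real.log ((k : ℝ) + α - 1) ^ (2 * σ) :=
        mul_pos hc0 hL2pos
      positivity
    calc γ (k + 1) * (μ₀ ^ 2 * (1 / (((k : ℝ) + α - 1) * Real.log ((k : ℝ) + α - 1) ^ (2 * σ))))
        ≤ γ 0 * (μ₀ ^ 2 * (1 / (((k : ℝ) + α - 1) * Real.log ((k : ℝ) + α - 1) ^ (2 * σ)))) :=
          mul_le_mul_of_nonneg_right (hγanti (Nat.zero_le _)) hposfac
      _ = μ₀ ^ 2 * γ 0 * (1 / (((k : ℝ) + (α - 1)) * Real.log ((k : ℝ) + (α - 1)) ^ (2 * σ))) := by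
          rw [show (k : ℝ) + (α - 1) = (k : ℝ) + α - 1 by ring]
          ring
  -- nonnegativity of the energy
  have hDnn : ∀ k : ℕ, 1 ≤ k → 0 ≤ D k := by
    intro k hk
    simp only [hD]
    have h1 : 0 ≤ μ k * γ k * ((k : ℝ) + α - 2) ^ 2 * W k :=
      mul_nonneg (mul_nonneg (mul_nonneg (hμpos k hk).le (hγpos k).le) (sq_nonneg _)) (hW k)
    have h2 : 0 ≤ ‖u k‖ ^ 2 / 2 := by positivity
    linarith
  -- term nonnegativity
  have hTnn : ∀ i : ℕ, 0 ≤ μ (i + 1) * γ (i + 1) * (((i + 1 : ℕ) : ℝ) + α - 2) * W (i + 1) := by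
    intro i
    have h0 : (0:ℝ) ≤ (i : ℝ) := Nat.cast_nonneg i
    have h1 : (0:ℝ) ≤ ((i + 1 : ℕ) : ℝ) + α - 2 := by push_cast; linarith
    exact mul_nonneg (mul_nonneg (mul_nonneg (hμpos (i + 1) (by omega)).le
      (hγpos (i + 1)).le) h1) (hW (i + 1))
  -- assemble
  rw [← summable_nat_add_iff 1]
  have hα2 : (0:ℝ) < α - 2 := by linarith
  have hκ2 : (0:ℝ) ≤ 2 * (α - 1) * κ := by
    have : (0:ℝ) ≤ α - 1 := by linarith
    positivity
  apply summable_of_sum_range_le (c := (D 1 + (2 * (α - 1) * κ) * (∑' k, E k)) / (α - 2)) hTnn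
  intro N
  rw [le_div_iff₀ hα2]
  have h2 : (∑ i ∈ Finset.range N,
      μ (i + 1) * γ (i + 1) * (((i + 1 : ℕ) : ℝ) + α - 2) * W (i + 1)) * (α - 2)
      = ∑ i ∈ Finset.range N,
          (α - 2) * (μ (i + 1) * γ (i + 1) * (((i + 1 : ℕ) : ℝ) + α - 2) * W (i + 1)) := by
    rw [Finset.sum_mul]
    congr 1
    funext i
    ring
  rw [h2]
  have h3 : ∑ i ∈ Finset.range N,
      (α - 2) * (μ (i + 1) * γ (i + 1) * (((i + 1 : ℕ) : ℝ) + α - 2) * W (i + 1))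
      ≤ ∑ i ∈ Finset.range N, ((D (i + 1) - D (i + 2)) + (2 * (α - 1) * κ) * E (i + 1)) := by
    apply Finset.sum_le_sum
    intro i _
    have hkey := key (i + 1) (by omega)
    have : D (i + 1 + 1) = D (i + 2) := by norm_num
    rw [this] at hkey
    have hEi : E (i + 1) = μ (i + 1 + 1) * μ (i + 1 + 1) * γ (i + 1 + 1) * ((↑(i + 1) : ℝ) + α - 1) := rfl
    rw [← hEi] at hkey
    linarith
  have h4 : ∑ i ∈ Finset.range N, ((D (i + 1) - D (i + 2)) + (2 * (α - 1) * κ) * E (i + 1))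
      = (∑ i ∈ Finset.range N, (D (i + 1) - D (i + 2)))
        + (2 * (α - 1) * κ) * ∑ i ∈ Finset.range N, E (i + 1) := by
    rw [Finset.sum_add_distrib, Finset.mul_sum]
  have h5 : ∑ i ∈ Finset.range N, (D (i + 1) - D (i + 2)) = D 1 - D (N + 1) := by
    have := Finset.sum_range_sub' (fun i => D (i + 1)) N
    simpa using this
  have h6 : ∑ i ∈ Finset.range N, E (i + 1) ≤ ∑' k, E k := by
    have h6a : ∑ i ∈ Finset.range N, E (i + 1) ≤ ∑ i ∈ Finset.range (N + 1), E i := by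
      rw [Finset.sum_range_succ']
      have := hEnn 0
      linarith
    exact le_trans h6a (Summable.sum_le_tsum (Finset.range (N + 1)) (fun i _ => hEnn i) hEsum)
  have h7 : 0 ≤ D (N + 1) := hDnn (N + 1) (by omega)
  have h8 : (2 * (α - 1) * κ) * ∑ i ∈ Finset.range N, E (i + 1)
      ≤ (2 * (α - 1) * κ) * ∑' k, E k := mul_le_mul_of_nonneg_left h6 hκ2
  linarith
end

section
/- The limit lim_{k→∞} [(k − 1)² ‖x^k − x^{k−1}‖² + 2 μ_k γ_k (k + α − 2)² W_k] exists (and is finite). -/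
open Filter Topology
open scoped RealInnerProductSpace

section aux
variable {E : Type*} [NormedAddCommGroup E] [InnerProductSpace ℝ E]

lemma inner_half_id (w v : E) :
    ⟪w, v⟫ - 1/2 * ‖w‖^2 = 1/2 * ‖v‖^2 - 1/2 * ‖v - w‖^2 := by
  rw [norm_sub_sq_real, real_inner_comm]
  ring

lemma master_id (d d' a : E) (k b : ℝ) (h : k + b ≠ 0) :
    k*(k+b)*(((k-1)/(k+b))^2*‖d‖^2 - ‖d'‖^2)
      + b*(k+b)*(‖a + ((k-1)/(k+b))•d‖^2 - ‖a + d'‖^2)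
    = ‖(k-1)•d + b•a‖^2 - ‖(k+b)•d' + b•a‖^2 := by
  simp only [norm_add_sq_real, norm_smul, Real.norm_eq_abs, mul_pow, sq_abs,
    real_inner_smul_left, real_inner_smul_right, real_inner_comm d a,
    real_inner_comm d' a]
  field_simp
  ring
end aux

lemma quasi_fejer (g ε : ℕ → ℝ) (hε0 : ∀ k, 0 ≤ ε k) (hεs : Summable ε)
    (hstep : ∀ k, 1 ≤ k → g (k+1) ≤ g k + ε k) (hlow : ∀ k, 1 ≤ k → 0 ≤ g k) :
    ∃ L : ℝ, Tendsto g atTop (𝓝 L) := by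
  set S : ℕ → ℝ := fun k => ∑ i ∈ Finset.range k, ε i with hS
  have hT : Tendsto S atTop (𝓝 (∑' i, ε i)) := hεs.hasSum.tendsto_sum_nat
  have hSle : ∀ k, S k ≤ ∑' i, ε i := fun k => Summable.sum_le_tsum _ (fun i _ => hε0 i) hεs
  set F : ℕ → ℝ := fun k => g k - S k with hF
  have hanti : Antitone (fun m => F (m+1)) := by
    apply antitone_nat_of_succ_le
    intro m
    have := hstep (m+1) (Nat.le_add_left 1 m)
    simp only [hF, hS, Finset.sum_range_succ]
    linarith
  have hbdd : BddBelow (Set.range (fun m => F (m+1))) := by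
    refine ⟨-(∑' i, ε i), ?_⟩
    rintro z ⟨m, rfl⟩
    have := hlow (m+1) (Nat.le_add_left 1 m)
    have := hSle (m+1)
    simp only [hF]
    linarith
  have h1 : Tendsto (fun m => F (m+1)) atTop (𝓝 (⨅ m, F (m+1))) :=
    tendsto_atTop_ciInf hanti hbdd
  have h2 : Tendsto F atTop (𝓝 (⨅ m, F (m+1))) := (tendsto_add_atTop_iff_nat 1).mp h1
  refine ⟨(⨅ m, F (m+1)) + ∑' i, ε i, ?_⟩
  have : g = fun k => F k + S k := by funext k; simp [hF]
  rw [this]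
  exact h2.add hT

lemma bertrand_sum (q : ℝ) (hq : 1 < q) :
    Summable (fun k : ℕ => 1 / (((k:ℝ)+1) * Real.log ((k:ℝ)+1) ^ q)) := by
  have hq0 : 0 ≤ q := by linarith
  have hmono : ∀ ⦃m n : ℕ⦄, 0 < m → m ≤ n →
      1 / (((n:ℝ)+1) * Real.log ((n:ℝ)+1) ^ q) ≤ 1 / (((m:ℝ)+1) * Real.log ((m:ℝ)+1) ^ q) := by
    intro m n hm hmn
    have h2 : (2:ℝ) ≤ (m:ℝ)+1 := by
      have : (1:ℝ) ≤ (m:ℝ) := by exact_mod_cast hm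
      linarith
    have hmn' : (m:ℝ)+1 ≤ (n:ℝ)+1 := by
      have : (m:ℝ) ≤ (n:ℝ) := by exact_mod_cast hmn
      linarith
    have hlm : 0 < Real.log ((m:ℝ)+1) := Real.log_pos (by linarith)
    have hpos : 0 < ((m:ℝ)+1) * Real.log ((m:ℝ)+1) ^ q :=
      mul_pos (by linarith) (Real.rpow_pos_of_pos hlm q)
    apply one_div_le_one_div_of_le hpos
    have := Real.log_le_log (by linarith : (0:ℝ) < (m:ℝ)+1) hmn'
    exact mul_le_mul hmn' (Real.rpow_le_rpow hlm.le this hq0)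
      (Real.rpow_pos_of_pos hlm q).le (by linarith)
  have hnn : ∀ k : ℕ, 0 ≤ 1 / (((k:ℝ)+1) * Real.log ((k:ℝ)+1) ^ q) := by
    intro k
    apply div_nonneg zero_le_one
    apply mul_nonneg (by positivity)
    exact Real.rpow_nonneg (Real.log_nonneg (by exact_mod_cast Nat.succ_le_succ (Nat.zero_le k))) q
  rw [← summable_condensed_iff_of_nonneg hnn hmono]
  have hL : 0 < Real.log 2 := Real.log_pos (by norm_num)
  have hLq : 0 < Real.log 2 ^ q := Real.rpow_pos_of_pos hL q
  refine Summable.of_nonneg_of_le (f := fun k : ℕ =>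
      (Real.log 2 ^ q)⁻¹ * (1 / ((k:ℝ) ^ q)) + if k = 0 then (Real.log 2 ^ q)⁻¹ else 0)
      (fun k => mul_nonneg (by positivity) (hnn (2^k))) (fun k => ?_) ?_
  · show _ ≤ (Real.log 2 ^ q)⁻¹ * (1 / ((k:ℝ) ^ q)) + if k = 0 then (Real.log 2 ^ q)⁻¹ else 0
    rcases Nat.eq_zero_or_pos k with hk | hk
    · subst hk
      norm_num
      rw [Real.zero_rpow (by linarith : q ≠ 0), inv_zero, mul_zero, zero_add]
      have hi : 0 < (Real.log 2 ^ q)⁻¹ := inv_pos.mpr hLq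
      nlinarith
    · have hk1 : (1:ℝ) ≤ (k:ℝ) := by exact_mod_cast hk
      have hc : ((2^k:ℕ):ℝ) = (2:ℝ)^k := by push_cast; ring
      have h2k1 : (1:ℝ) ≤ (2:ℝ)^k := by
        rw [← hc]; exact_mod_cast Nat.one_le_two_pow
      have hklog : 0 < (k:ℝ) * Real.log 2 := by nlinarith
      have hlog1 : (k:ℝ) * Real.log 2 ≤ Real.log (((2^k:ℕ):ℝ)+1) := by
        rw [hc]
        calc (k:ℝ) * Real.log 2 = Real.log ((2:ℝ)^k) := by rw [Real.log_pow]
          _ ≤ _ := Real.log_le_log (by positivity) (by linarith)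
        
      have hb1 : ((k:ℝ) * Real.log 2) ^ q ≤ Real.log (((2^k:ℕ):ℝ)+1) ^ q :=
        Real.rpow_le_rpow hklog.le hlog1 hq0
      have hkq : 0 < ((k:ℝ) * Real.log 2) ^ q := Real.rpow_pos_of_pos hklog q
      have hR : (Real.log 2 ^ q)⁻¹ * (1 / ((k:ℝ) ^ q)) = 1 / (((k:ℝ) * Real.log 2) ^ q) := by
        rw [Real.mul_rpow (by positivity) hL.le]
        rw [one_div, one_div, mul_comm, ← mul_inv]
      have h3 : 0 < Real.log (((2^k:ℕ):ℝ)+1) ^ q :=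
        Real.rpow_pos_of_pos (Real.log_pos (by rw [hc]; linarith)) q
      have h2 : (2:ℝ)^k ≤ ((2^k:ℕ):ℝ)+1 := by rw [hc]; linarith
      rw [if_neg (Nat.pos_iff_ne_zero.mp hk), add_zero, hR, mul_one_div,
        div_le_div_iff₀ (mul_pos (by positivity) h3) hkq]
      calc (2:ℝ)^k * ((k:ℝ) * Real.log 2) ^ q
          ≤ (((2^k:ℕ):ℝ)+1) * Real.log (((2^k:ℕ):ℝ)+1) ^ q :=
            mul_le_mul h2 hb1 hkq.le (by linarith)
        _ = 1 * ((((2^k:ℕ):ℝ)+1) * Real.log (((2^k:ℕ):ℝ)+1) ^ q) := by ring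
  · apply Summable.add
    · exact ((Real.summable_one_div_nat_rpow).mpr hq).mul_left _
    · exact summable_of_finite_support (by
        apply Set.Finite.subset (Set.finite_singleton 0)
        intro k hk
        simp only [Function.mem_support, ne_eq, ite_eq_right_iff, not_forall] at hk
        exact hk.1)



set_option maxHeartbeats 1600000 in
/-- The limit
`lim_{k→∞} [(k − 1)² ‖x^k − x^{k−1}‖² + 2 μ_k γ_k (k + α − 2)² W_k]`
exists (and is finite). -/
theorem stmt_12 (n : ℕ) (hn : 0 < n) (α σ μ₀ κ : ℝ)
    (hα : 3 < α) (hσ : 1 / 2 < σ) (hσ1 : σ ≤ 1) (hμ₀ : 0 < μ₀) (hκ : 0 ≤ κ)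
    (γ : ℕ → ℝ) (hγpos : ∀ k, 0 < γ k) (hγanti : Antitone γ)
    (μ : ℕ → ℝ)
    (hμ : ∀ k : ℕ, 1 ≤ k →
      μ k = μ₀ / (((k : ℝ) + α - 2) * Real.log ((k : ℝ) + α - 2) ^ σ))
    (x y : ℕ → EuclideanSpace ℝ (Fin n))
    (hy : ∀ k : ℕ,
      y k = x k + ((((k : ℝ) - 1) / ((k : ℝ) + α - 1)) : ℝ) • (x k - x (k - 1)))
    (xstar : EuclideanSpace ℝ (Fin n)) (W : ℕ → ℝ) (hW : ∀ k, 0 ≤ W k)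
    (hA : ∀ k : ℕ, W (k + 1) ≤ W k
      + (μ (k + 1) * γ (k + 1))⁻¹ * ⟪y k - x (k + 1), y k - x k⟫
      - 1 / 2 * (μ (k + 1) * γ (k + 1))⁻¹ * ‖x (k + 1) - y k‖ ^ 2)
    (hB : ∀ k : ℕ, W (k + 1) ≤
      (μ (k + 1) * γ (k + 1))⁻¹ * ⟪y k - x (k + 1), y k - xstar⟫
      - 1 / 2 * (μ (k + 1) * γ (k + 1))⁻¹ * ‖x (k + 1) - y k‖ ^ 2
      + 2 * κ * μ (k + 1)) :
    ∃ L : ℝ, Tendsto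
      (fun k : ℕ => ((k : ℝ) - 1) ^ 2 * ‖x k - x (k - 1)‖ ^ 2
        + 2 * μ k * γ k * ((k : ℝ) + α - 2) ^ 2 * W k) atTop (𝓝 L) := by
  -- basic positivity facts
  have hcast1 : ∀ k : ℕ, 1 ≤ k → (1:ℝ) ≤ (k:ℝ) := fun k hk => by exact_mod_cast hk
  have hlogpos : ∀ k : ℕ, 1 ≤ k → 0 < Real.log ((k:ℝ) + α - 2) := by
    intro k hk
    exact Real.log_pos (by have := hcast1 k hk; linarith)
  have hμpos : ∀ k : ℕ, 1 ≤ k → 0 < μ k := by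
    intro k hk
    rw [hμ k hk]
    have := hcast1 k hk
    exact div_pos hμ₀ (mul_pos (by linarith) (Real.rpow_pos_of_pos (hlogpos k hk) σ))
  have hspos : ∀ k : ℕ, 1 ≤ k → 0 < μ k * γ k :=
    fun k hk => mul_pos (hμpos k hk) (hγpos k)
  have hμanti : ∀ k : ℕ, 1 ≤ k → μ (k+1) ≤ μ k := by
    intro k hk
    have hc := hcast1 k hk
    rw [hμ k hk, hμ (k+1) (by omega)]
    push_cast
    have harg : (k:ℝ) + 1 + α - 2 = ((k:ℝ) + α - 2) + 1 := by ring
    rw [harg]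
    have hl0 : 0 < Real.log ((k:ℝ) + α - 2) := hlogpos k hk
    have hl1 : Real.log ((k:ℝ) + α - 2) ≤ Real.log (((k:ℝ) + α - 2) + 1) :=
      Real.log_le_log (by linarith) (by linarith)
    apply div_le_div_of_nonneg_left hμ₀.le (mul_pos (by linarith)
      (Real.rpow_pos_of_pos hl0 σ))
    apply mul_le_mul (by linarith) (Real.rpow_le_rpow hl0.le hl1 (by linarith))
      (Real.rpow_pos_of_pos hl0 σ).le (by linarith)
  have hsanti : ∀ k : ℕ, 1 ≤ k → μ (k+1) * γ (k+1) ≤ μ k * γ k := by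
    intro k hk
    exact mul_le_mul (hμanti k hk) (hγanti (Nat.le_succ k)) (hγpos (k+1)).le
      (hμpos k hk).le
  have hgap : ∀ k : ℕ, 1 ≤ k →
      μ (k+1) * ((k:ℝ)+α-1)^2 - μ k * ((k:ℝ)+α-2)^2 ≤ μ (k+1) * ((k:ℝ)+α-1) := by
    intro k hk
    have hc := hcast1 k hk
    rw [hμ k hk, hμ (k+1) (by omega)]
    push_cast
    have harg : (k:ℝ) + 1 + α - 2 = (k:ℝ) + α - 1 := by ring
    rw [harg]
    set u : ℝ := (k:ℝ) + α - 2 with hu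
    have hu2 : 2 < u := by simp only [hu]; linarith
    have hu1 : (k:ℝ) + α - 1 = u + 1 := by simp only [hu]; ring
    rw [hu1]
    have hl0 : 0 < Real.log u := Real.log_pos (by linarith)
    have hl1 : 0 < Real.log (u+1) := Real.log_pos (by linarith)
    set L : ℝ := Real.log u ^ σ with hL
    set L1 : ℝ := Real.log (u+1) ^ σ with hL1
    have hLpos : 0 < L := Real.rpow_pos_of_pos hl0 σ
    have hL1pos : 0 < L1 := Real.rpow_pos_of_pos hl1 σ
    have hLle : L ≤ L1 :=
      Real.rpow_le_rpow hl0.le (Real.log_le_log (by linarith) (by linarith)) (by linarith)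
    have e1 : μ₀ / ((u+1) * L1) * (u+1)^2 = μ₀*(u+1)/L1 := by
      field_simp
    have e2 : μ₀ / (u * L) * u^2 = μ₀*u/L := by
      field_simp
    have e3 : μ₀ / ((u+1) * L1) * (u+1) = μ₀/L1 := by
      field_simp
    rw [e1, e2, e3]
    have e4 : μ₀*(u+1)/L1 = μ₀*u/L1 + μ₀/L1 := by
      ring
    have e5 : μ₀*u/L1 ≤ μ₀*u/L :=
      div_le_div_of_nonneg_left (by nlinarith) hLpos hLle
    linarith
  -- step inequalities from hA, hB
  have hA' : ∀ k : ℕ, 1 ≤ k →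
      (μ (k+1) * γ (k+1)) * (W (k+1) - W k) ≤
      1/2 * (((k:ℝ)-1)/((k:ℝ)+α-1))^2 * ‖x k - x (k-1)‖^2
        - 1/2 * ‖x (k+1) - x k‖^2 := by
    intro k hk
    have hs : 0 < μ (k+1) * γ (k+1) := hspos (k+1) (by omega)
    have h0 := hA k
    have h1 : μ (k+1) * γ (k+1) * (W (k+1) - W k) ≤
        ⟪y k - x (k+1), y k - x k⟫ - 1/2 * ‖x (k+1) - y k‖^2 := by
      have h2 : W (k+1) - W k ≤ (μ (k+1) * γ (k+1))⁻¹ * ⟪y k - x (k+1), y k - x k⟫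
          - 1/2 * (μ (k+1) * γ (k+1))⁻¹ * ‖x (k+1) - y k‖^2 := by linarith
      have h3 := mul_le_mul_of_nonneg_left h2 hs.le
      have h4 : μ (k+1) * γ (k+1) * ((μ (k+1) * γ (k+1))⁻¹ * ⟪y k - x (k+1), y k - x k⟫
          - 1/2 * (μ (k+1) * γ (k+1))⁻¹ * ‖x (k+1) - y k‖^2)
          = ⟪y k - x (k+1), y k - x k⟫ - 1/2 * ‖x (k+1) - y k‖^2 := by
        have hinv : μ (k+1) * γ (k+1) * (μ (k+1) * γ (k+1))⁻¹ = 1 := mul_inv_cancel₀ hs.ne'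
        linear_combination (⟪y k - x (k+1), y k - x k⟫ - 1/2 * ‖x (k+1) - y k‖^2) * hinv
      rw [h4] at h3
      exact h3
    have hv : y k - x k = (((k:ℝ)-1)/((k:ℝ)+α-1)) • (x k - x (k-1)) := by
      rw [hy k]
      exact add_sub_cancel_left _ _
    have hw : ‖x (k+1) - y k‖ = ‖y k - x (k+1)‖ := norm_sub_rev _ _
    have hid := inner_half_id (y k - x (k+1)) (y k - x k)
    have hvw : (y k - x k) - (y k - x (k+1)) = x (k+1) - x k := by abel
    rw [hvw] at hid
    rw [hw] at h1
    have hnv : ‖y k - x k‖^2 = (((k:ℝ)-1)/((k:ℝ)+α-1))^2 * ‖x k - x (k-1)‖^2 := by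
      rw [hv, norm_smul, Real.norm_eq_abs, mul_pow, sq_abs]
    linarith
  have hB' : ∀ k : ℕ, 1 ≤ k →
      (μ (k+1) * γ (k+1)) * W (k+1) ≤
      1/2 * ‖(x k - xstar) + (((k:ℝ)-1)/((k:ℝ)+α-1)) • (x k - x (k-1))‖^2
        - 1/2 * ‖(x k - xstar) + (x (k+1) - x k)‖^2
        + 2 * κ * μ (k+1) * (μ (k+1) * γ (k+1)) := by
    intro k hk
    have hs : 0 < μ (k+1) * γ (k+1) := hspos (k+1) (by omega)
    have h0 := hB k
    have h1 : μ (k+1) * γ (k+1) * W (k+1) ≤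
        ⟪y k - x (k+1), y k - xstar⟫ - 1/2 * ‖x (k+1) - y k‖^2
          + 2 * κ * μ (k+1) * (μ (k+1) * γ (k+1)) := by
      have h3 := mul_le_mul_of_nonneg_left h0 hs.le
      have h4 : μ (k+1) * γ (k+1) * ((μ (k+1) * γ (k+1))⁻¹ * ⟪y k - x (k+1), y k - xstar⟫
          - 1/2 * (μ (k+1) * γ (k+1))⁻¹ * ‖x (k+1) - y k‖^2 + 2 * κ * μ (k+1))
          = ⟪y k - x (k+1), y k - xstar⟫ - 1/2 * ‖x (k+1) - y k‖^2
            + 2 * κ * μ (k+1) * (μ (k+1) * γ (k+1)) := by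
        have hinv : μ (k+1) * γ (k+1) * (μ (k+1) * γ (k+1))⁻¹ = 1 := mul_inv_cancel₀ hs.ne'
        linear_combination (⟪y k - x (k+1), y k - xstar⟫ - 1/2 * ‖x (k+1) - y k‖^2) * hinv
      rw [h4] at h3
      linarith
    have hv : y k - xstar = (x k - xstar) + (((k:ℝ)-1)/((k:ℝ)+α-1)) • (x k - x (k-1)) := by
      rw [hy k]
      abel
    have hw : ‖x (k+1) - y k‖ = ‖y k - x (k+1)‖ := norm_sub_rev _ _
    have hid := inner_half_id (y k - x (k+1)) (y k - xstar)
    have hvw : (y k - xstar) - (y k - x (k+1)) = (x k - xstar) + (x (k+1) - x k) := by abel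
    rw [hvw] at hid
    rw [hw] at h1
    rw [hv] at hid h1
    linarith
  -- Lyapunov function
  set Φ : ℕ → ℝ := fun j => ((j:ℝ)+α-2)^2 * (μ j * γ j) * W j
      + 1/2 * ‖(((j:ℝ))-1) • (x j - x (j-1)) + (α-1) • (x j - xstar)‖^2 with hΦdef
  have hΦnn : ∀ k : ℕ, 1 ≤ k → 0 ≤ Φ k := by
    intro k hk
    have h1 : 0 ≤ ((k:ℝ)+α-2)^2 * (μ k * γ k) * W k :=
      mul_nonneg (mul_nonneg (sq_nonneg _) (hspos k hk).le) (hW k)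
    have h2 : 0 ≤ 1/2 * ‖(((k:ℝ))-1) • (x k - x (k-1)) + (α-1) • (x k - xstar)‖^2 := by
      positivity
    simp only [hΦdef]
    linarith
  set e : ℕ → ℝ := fun k => 2*(α-1)*((k:ℝ)+α-1)*κ*(μ (k+1) * (μ (k+1) * γ (k+1)))
    with hedef
  have henn : ∀ k : ℕ, 0 ≤ e k := by
    intro k
    have h1 : 0 < μ (k+1) := hμpos (k+1) (Nat.le_add_left 1 k)
    have h2 : 0 < γ (k+1) := hγpos (k+1)
    simp only [hedef]
    have h3 : (0:ℝ) ≤ (k:ℝ) := Nat.cast_nonneg k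
    have h4 : (0:ℝ) ≤ (k:ℝ)+α-1 := by linarith
    have h5 : (0:ℝ) ≤ 2*(α-1) := by linarith
    exact mul_nonneg (mul_nonneg (mul_nonneg h5 h4) hκ)
      (mul_nonneg h1.le (mul_nonneg h1.le (hγpos (k+1)).le))
  have hΦstep : ∀ k : ℕ, 1 ≤ k →
      Φ (k+1) + (α-3) * (k:ℝ) * (μ (k+1) * γ (k+1)) * W k ≤ Φ k + e k := by
    intro k hk
    have hc := hcast1 k hk
    have hs1 : 0 < μ (k+1) * γ (k+1) := hspos (k+1) (by omega)
    have hs0 : 0 < μ k * γ k := hspos k hk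
    have hM := master_id (x k - x (k-1)) (x (k+1) - x k) (x k - xstar) (k:ℝ) (α-1)
      (by intro h0; nlinarith)
    rw [show (k:ℝ) + (α-1) = (k:ℝ)+α-1 from by ring] at hM
    have t1 := mul_le_mul_of_nonneg_left (hA' k hk)
      (show (0:ℝ) ≤ (k:ℝ)*((k:ℝ)+α-1) by nlinarith)
    have t2 := mul_le_mul_of_nonneg_left (hB' k hk)
      (show (0:ℝ) ≤ (α-1)*((k:ℝ)+α-1) by nlinarith)
    have hsur : (k:ℝ)*((k:ℝ)+α-1)*(μ (k+1)*γ (k+1)) + (α-3)*(k:ℝ)*(μ (k+1)*γ (k+1))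
        ≤ ((k:ℝ)+α-2)^2*(μ k*γ k) := by
      have h5 := hsanti k hk
      have h6 : 0 ≤ ((k:ℝ)+α-2)^2 * (μ k * γ k - μ (k+1) * γ (k+1)) :=
        mul_nonneg (sq_nonneg _) (by linarith)
      have h7 : 0 ≤ (α-2)^2 * (μ (k+1) * γ (k+1)) :=
        mul_nonneg (sq_nonneg _) hs1.le
      nlinarith [h6, h7]
    have hsurW := mul_le_mul_of_nonneg_right hsur (hW k)
    simp only [hΦdef, hedef]
    push_cast [Nat.add_sub_cancel]
    have hvec : ((k:ℝ)+1-1) • (x (k+1) - x k) + (α-1) • (x (k+1) - xstar)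
        = ((k:ℝ)+α-1) • (x (k+1) - x k) + (α-1) • (x k - xstar) := by
      rw [show ((k:ℝ)+α-1) = ((k:ℝ)+1-1) + (α-1) from by ring, add_smul]
      simp only [smul_sub]
      abel
    rw [hvec]
    linarith [t1, t2, hM, hsurW]
  have hEstep : ∀ k : ℕ, 1 ≤ k →
      (((k+1:ℕ):ℝ) - 1) ^ 2 * ‖x (k+1) - x k‖ ^ 2
        + 2 * μ (k+1) * γ (k+1) * (((k+1:ℕ):ℝ) + α - 2) ^ 2 * W (k+1)
      ≤ (((k:ℕ):ℝ) - 1) ^ 2 * ‖x k - x (k-1)‖ ^ 2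
        + 2 * μ k * γ k * (((k:ℕ):ℝ) + α - 2) ^ 2 * W k
        + 2*α*((k:ℝ) * (μ (k+1) * γ (k+1)) * W k) := by
    intro k hk
    have hc := hcast1 k hk
    have hs1 : 0 < μ (k+1) * γ (k+1) := hspos (k+1) (by omega)
    have hs0 : 0 < μ k * γ k := hspos k hk
    have hA2 := mul_le_mul_of_nonneg_left (hA' k hk)
      (show (0:ℝ) ≤ 2*((k:ℝ)+α-1)^2 by positivity)
    have hne : ((k:ℝ)+α-1) ≠ 0 := by nlinarith
    have httD : 2*((k:ℝ)+α-1)^2 * (1/2 * (((k:ℝ)-1)/((k:ℝ)+α-1))^2 * ‖x k - x (k-1)‖^2)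
        = ((k:ℝ)-1)^2 * ‖x k - x (k-1)‖^2 := by
      field_simp
    have hD' : ((k:ℝ)^2 - ((k:ℝ)+α-1)^2) * ‖x (k+1) - x k‖^2 ≤ 0 :=
      mul_nonpos_of_nonpos_of_nonneg (by nlinarith) (sq_nonneg _)
    have hgapk : (μ (k+1)*γ (k+1))*((k:ℝ)+α-1)^2 - (μ k*γ k)*((k:ℝ)+α-2)^2
        ≤ α*(k:ℝ)*(μ (k+1)*γ (k+1)) := by
      have g1 := hgap k hk
      have g2 : γ (k+1) ≤ γ k := hγanti (Nat.le_succ k)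
      have g3 : γ (k+1) * (μ k * ((k:ℝ)+α-2)^2) ≤ γ k * (μ k * ((k:ℝ)+α-2)^2) :=
        mul_le_mul_of_nonneg_right g2 (mul_nonneg (hμpos k hk).le (sq_nonneg _))
      have g4 := mul_le_mul_of_nonneg_left g1 (hγpos (k+1)).le
      have g5 : ((k:ℝ)+α-1) ≤ α*(k:ℝ) := by nlinarith
      have g6 := mul_le_mul_of_nonneg_right g5 hs1.le
      nlinarith [g3, g4, g6]
    have hgapW := mul_le_mul_of_nonneg_right hgapk
      (show (0:ℝ) ≤ 2 * W k by linarith [hW k])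
    push_cast
    nlinarith [hA2, httD, hD', hgapW]
  -- summability of e
  have hes : Summable e := by
    rw [← summable_nat_add_iff 1]
    have hq : 1 < 2*σ := by linarith
    have hb := bertrand_sum (2*σ) hq
    have hbs : Summable (fun j : ℕ => (2*(α-1)*κ*μ₀^2*γ 0) *
        (1 / ((((j+1:ℕ):ℝ)+1) * Real.log (((j+1:ℕ):ℝ)+1) ^ (2*σ)))) :=
      ((summable_nat_add_iff 1).mpr hb).mul_left _
    apply Summable.of_nonneg_of_le (fun k => henn (k+1)) (fun k => ?_) hbs
    have hμ2 : μ (k+2) = μ₀ / ((((k:ℝ))+α) * Real.log (((k:ℝ))+α) ^ σ) := by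
      have h1 := hμ (k+2) (by omega)
      push_cast at h1
      rw [show (k:ℝ)+2+α-2 = (k:ℝ)+α from by ring] at h1
      exact h1
    have hk2 : (0:ℝ) ≤ (k:ℝ) := Nat.cast_nonneg k
    have hL2 : 0 < Real.log ((k:ℝ)+2) := Real.log_pos (by linarith)
    have hLv : 0 < Real.log ((k:ℝ)+α) := Real.log_pos (by linarith)
    have hlle : Real.log ((k:ℝ)+2) ≤ Real.log ((k:ℝ)+α) :=
      Real.log_le_log (by linarith) (by linarith)
    have hp : ∀ z : ℝ, 0 < Real.log z → (Real.log z ^ σ)^(2:ℕ) = Real.log z ^ (2*σ) := by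
      intro z hz
      rw [← Real.rpow_natCast (Real.log z ^ σ) 2, ← Real.rpow_mul hz.le]
      norm_num
      ring_nf
    simp only [hedef]
    push_cast
    rw [show (k:ℝ)+1+α-1 = (k:ℝ)+α from by ring, show (k:ℝ)+1+1 = (k:ℝ)+2 from by ring,
      hμ2]
    have hvne : ((k:ℝ)+α) ≠ 0 := by linarith
    have hLσ : 0 < Real.log ((k:ℝ)+α) ^ σ := Real.rpow_pos_of_pos hLv σ
    have eL : 2*(α-1)*((k:ℝ)+α)*κ*((μ₀ / (((k:ℝ)+α) * Real.log ((k:ℝ)+α) ^ σ))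
          * ((μ₀ / (((k:ℝ)+α) * Real.log ((k:ℝ)+α) ^ σ)) * γ (k+2)))
        = (2*(α-1)*κ*μ₀^2*γ (k+2)) *
          (1/(((k:ℝ)+α)*(Real.log ((k:ℝ)+α) ^ σ)^(2:ℕ))) := by
      field_simp
    rw [eL, hp _ hLv]
    have hb1 : 0 ≤ 1/(((k:ℝ)+α) * Real.log ((k:ℝ)+α) ^ (2*σ)) := by
      have := Real.rpow_pos_of_pos hLv (2*σ)
      positivity
    have hb2 : 1/(((k:ℝ)+α) * Real.log ((k:ℝ)+α) ^ (2*σ))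
        ≤ 1/(((k:ℝ)+2) * Real.log ((k:ℝ)+2) ^ (2*σ)) := by
      apply one_div_le_one_div_of_le
        (mul_pos (by linarith) (Real.rpow_pos_of_pos hL2 (2*σ)))
      exact mul_le_mul (by linarith)
        (Real.rpow_le_rpow hL2.le hlle (by linarith))
        (Real.rpow_pos_of_pos hL2 (2*σ)).le (by linarith)
    have ha1 : 2*(α-1)*κ*μ₀^2*γ (k+2) ≤ 2*(α-1)*κ*μ₀^2*γ 0 := by
      apply mul_le_mul_of_nonneg_left (hγanti (Nat.zero_le _))
      have : (0:ℝ) ≤ 2*(α-1) := by linarith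
      positivity
    have ha0 : 0 ≤ 2*(α-1)*κ*μ₀^2*γ (k+2) := by
      have h1 : (0:ℝ) ≤ 2*(α-1) := by linarith
      have := (hγpos (k+2)).le
      positivity
    calc 2*(α-1)*κ*μ₀^2*γ (k+2) * (1/(((k:ℝ)+α) * Real.log ((k:ℝ)+α) ^ (2*σ)))
        ≤ 2*(α-1)*κ*μ₀^2*γ 0 * (1/(((k:ℝ)+2) * Real.log ((k:ℝ)+2) ^ (2*σ))) :=
          mul_le_mul ha1 hb2 hb1 (le_trans ha0 ha1)
      _ = _ := by norm_num
  -- summability of ρ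
  set ρ : ℕ → ℝ := fun k => (k:ℝ) * (μ (k+1) * γ (k+1)) * W k with hρdef
  have hρnn : ∀ k, 0 ≤ ρ k := by
    intro k
    simp only [hρdef]
    exact mul_nonneg (mul_nonneg (Nat.cast_nonneg k) (hspos (k+1) (Nat.le_add_left 1 k)).le)
      (hW k)
  have hρs : Summable (fun k => (α-3) * ρ k) := by
    have hkey : ∀ m : ℕ, 1 ≤ m →
        ∑ i ∈ Finset.range m, (α-3) * ρ i + Φ m ≤ Φ 1 + ∑ i ∈ Finset.range m, e i := by
      intro m hm
      induction m, hm using Nat.le_induction with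
      | base =>
        simp only [Finset.sum_range_one, hρdef]
        norm_num
        linarith [henn 0]
      | succ m hm ih =>
        rw [Finset.sum_range_succ, Finset.sum_range_succ]
        have := hΦstep m hm
        simp only [hρdef]
        simp only [hρdef] at ih
        linarith
    apply summable_of_sum_range_le (c := Φ 1 + ∑' i, e i)
      (fun k => mul_nonneg (by linarith) (hρnn k))
    intro m
    rcases Nat.eq_zero_or_pos m with hm | hm
    · subst hm
      simp only [Finset.sum_range_zero]
      have := hΦnn 1 le_rfl
      have : 0 ≤ ∑' i, e i := tsum_nonneg henn
      linarith
    · have h1 := hkey m hm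
      have h2 : ∑ i ∈ Finset.range m, e i ≤ ∑' i, e i :=
        Summable.sum_le_tsum _ (fun i _ => henn i) hes
      have := hΦnn m hm
      linarith
  -- quasi-Fejér argument
  have hα3 : (0:ℝ) < α - 3 := by linarith
  apply quasi_fejer _ (fun k => (2*α/(α-3)) * ((α-3) * ρ k))
  · intro k
    have := hρnn k
    have : 0 < 2*α/(α-3) := by positivity
    positivity
  · exact hρs.mul_left _
  · intro k hk
    have h1 := hEstep k hk
    have h2 : (2*α/(α-3)) * ((α-3) * ρ k) = 2*α*ρ k := by
      field_simp
    rw [h2]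
    push_cast at h1 ⊢
    simp only [hρdef]
    convert h1 using 2 <;> push_cast <;> ring
  · intro k hk
    have h1 : 0 ≤ ((k:ℝ) - 1) ^ 2 * ‖x k - x (k-1)‖ ^ 2 := by positivity
    have h2 : 0 ≤ 2 * μ k * γ k * ((k:ℝ) + α - 2) ^ 2 * W k :=
      mul_nonneg (mul_nonneg (mul_nonneg (by linarith [hμpos k hk] : (0:ℝ) ≤ 2 * μ k)
        (hγpos k).le) (sq_nonneg _)) (hW k)
    linarith
end

section
/- The series Σ_{k=1}^∞ k ‖x^{k+1} − x^k‖² converges. -/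
open Filter Topology
open scoped RealInnerProductSpace

lemma bert {p : ℝ} (hp : 1 < p) :
    Summable (fun k : ℕ => 1 / (((k : ℝ) + 2) * Real.log ((k : ℝ) + 2) ^ p)) := by
  set f : ℕ → ℝ := fun k => 1 / (((k : ℝ) + 2) * Real.log ((k : ℝ) + 2) ^ p) with hf
  have hden : ∀ s : ℝ, 2 ≤ s → 0 < s * Real.log s ^ p := by
    intro s hs
    have hl : 0 < Real.log s := Real.log_pos (by linarith)
    positivity
  have hnonneg : ∀ k, 0 ≤ f k := by
    intro k
    have h0 : (0:ℝ) ≤ (k:ℝ) := Nat.cast_nonneg k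
    have := hden ((k : ℝ) + 2) (by linarith)
    positivity
  have hmono : ∀ ⦃m n : ℕ⦄, 0 < m → m ≤ n → f n ≤ f m := by
    intro m n _ hmn
    have hm0 : (0:ℝ) ≤ (m:ℝ) := Nat.cast_nonneg m
    have hn0 : (0:ℝ) ≤ (n:ℝ) := Nat.cast_nonneg n
    have hm2 : (2 : ℝ) ≤ (m : ℝ) + 2 := by linarith
    have hcast : (m : ℝ) ≤ (n : ℝ) := by exact_mod_cast hmn
    have h1 := hden ((m : ℝ) + 2) hm2
    have hlogle : Real.log ((m : ℝ) + 2) ≤ Real.log ((n : ℝ) + 2) :=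
      Real.log_le_log (by linarith) (by linarith)
    have hlm : 0 < Real.log ((m : ℝ) + 2) := Real.log_pos (by linarith)
    have h2 : ((m : ℝ) + 2) * Real.log ((m : ℝ) + 2) ^ p
        ≤ ((n : ℝ) + 2) * Real.log ((n : ℝ) + 2) ^ p := by
      apply mul_le_mul (by linarith) (Real.rpow_le_rpow hlm.le hlogle (by linarith)) ?_ (by linarith)
      positivity
    exact one_div_le_one_div_of_le h1 h2
  rw [← summable_condensed_iff_of_nonneg hnonneg hmono]
  rw [← summable_nat_add_iff 1]
  have hlog2 : 0 < Real.log 2 := Real.log_pos (by norm_num)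
  apply Summable.of_nonneg_of_le
    (f := fun k : ℕ => (Real.log 2)⁻¹ ^ p * (1 / ((k : ℝ) + 1) ^ p))
    (fun k => by have := hnonneg (2^(k+1)); positivity)
  · intro k
    have hk1 : (0:ℝ) < (k:ℝ) + 1 := by positivity
    have h2k : (2:ℝ) ≤ (2:ℝ) ^ (k+1) := by
      calc (2:ℝ) = 2 ^ 1 := (pow_one 2).symm
      _ ≤ 2 ^ (k+1) := by apply pow_le_pow_right₀ (by norm_num); omega
    have hcast : ((2 ^ (k+1) : ℕ) : ℝ) = (2:ℝ)^(k+1) := by push_cast; ring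
    rw [hf]
    simp only [hcast]
    have hlogge : ((k:ℝ)+1) * Real.log 2 ≤ Real.log ((2:ℝ)^(k+1) + 2) := by
      calc ((k:ℝ)+1) * Real.log 2 = Real.log ((2:ℝ)^(k+1)) := by
            rw [Real.log_pow]; push_cast; ring
      _ ≤ Real.log ((2:ℝ)^(k+1) + 2) := Real.log_le_log (by positivity) (by linarith)
    have hlpos : 0 < ((k:ℝ)+1) * Real.log 2 := by positivity
    have hrpow : (((k:ℝ)+1) * Real.log 2) ^ p ≤ Real.log ((2:ℝ)^(k+1) + 2) ^ p :=
      Real.rpow_le_rpow hlpos.le hlogge (by linarith)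
    have hdpos := hden ((2:ℝ)^(k+1) + 2) (by linarith)
    calc (2:ℝ) ^ (k+1) * (1 / (((2:ℝ)^(k+1) + 2) * Real.log ((2:ℝ)^(k+1) + 2) ^ p))
        ≤ (2:ℝ) ^ (k+1) * (1 / (((2:ℝ)^(k+1)) * (((k:ℝ)+1) * Real.log 2) ^ p)) := by
          apply mul_le_mul_of_nonneg_left ?_ (by positivity)
          apply one_div_le_one_div_of_le (by positivity)
          apply mul_le_mul (by linarith) hrpow (by positivity) (by positivity)
      _ = (Real.log 2)⁻¹ ^ p * (1 / ((k : ℝ) + 1) ^ p) := by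
          rw [Real.mul_rpow hk1.le hlog2.le, Real.inv_rpow hlog2.le]
          have h1 : ((k:ℝ)+1)^p ≠ 0 := by positivity
          have h2 : (Real.log 2)^p ≠ 0 := by positivity
          have h3 : ((2:ℝ))^(k+1) ≠ 0 := by positivity
          field_simp
  · apply Summable.mul_left
    have := (Real.summable_one_div_nat_rpow (p := p)).mpr hp
    have h1 := (summable_nat_add_iff (f := fun n : ℕ => 1 / (n : ℝ) ^ p) 1).mpr this
    convert h1 using 2 with k
    push_cast
    · rfl
    · rw [Nat.cast_add_one]


lemma inner_half {F : Type*} [NormedAddCommGroup F] [InnerProductSpace ℝ F] (a b : F) :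
    ⟪a, b⟫ - 1/2 * ‖a‖^2 = 1/2 * ‖b‖^2 - 1/2 * ‖b - a‖^2 := by
  have h : ‖b - a‖^2 = ‖b‖^2 - 2 * ⟪b, a⟫ + ‖a‖^2 := norm_sub_sq_real b a
  have hc : ⟪b, a⟫ = ⟪a, b⟫ := (real_inner_comm a b)
  linarith

lemma stepA_aux {F : Type*} [NormedAddCommGroup F] [InnerProductSpace ℝ F]
    (s w w' : ℝ) (hs : 0 < s) (yk X xk : F)
    (hA : w' ≤ w + s⁻¹ * ⟪yk - X, yk - xk⟫ - 1/2 * s⁻¹ * ‖X - yk‖^2) :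
    s * w' ≤ s * w + 1/2 * ‖yk - xk‖^2 - 1/2 * ‖X - xk‖^2 := by
  have hh := inner_half (yk - X) (yk - xk)
  have hba : (yk - xk) - (yk - X) = X - xk := by abel
  rw [hba] at hh
  have hrev : ‖X - yk‖ = ‖yk - X‖ := norm_sub_rev _ _
  have h := mul_le_mul_of_nonneg_left hA hs.le
  have e : s * (w + s⁻¹ * ⟪yk - X, yk - xk⟫ - 1/2 * s⁻¹ * ‖X - yk‖^2)
      = s * w + ⟪yk - X, yk - xk⟫ - 1/2 * ‖X - yk‖^2 := by
    field_simp
  rw [e] at h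
  rw [hrev] at h
  linarith

lemma master_aux {F : Type*} [NormedAddCommGroup F] [InnerProductSpace ℝ F]
    (t s w w' c : ℝ) (ht : 1 ≤ t) (hs : 0 < s)
    (yk X xk xs Vm V' : F)
    (idA : t • (yk - X) = Vm - V')
    (idB : (t - 1) • (yk - xk) + (yk - xs) = Vm)
    (hA : w' ≤ w + s⁻¹ * ⟪yk - X, yk - xk⟫ - 1/2 * s⁻¹ * ‖X - yk‖^2)
    (hB : w' ≤ s⁻¹ * ⟪yk - X, yk - xs⟫ - 1/2 * s⁻¹ * ‖X - yk‖^2 + c) :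
    t^2 * s * w' + 1/2 * ‖V'‖^2 ≤ (t^2 - t) * s * w + 1/2 * ‖Vm‖^2 + t * s * c := by
  have hA' : s * w' ≤ s * w + ⟪yk - X, yk - xk⟫ - 1/2 * ‖X - yk‖^2 := by
    have h := mul_le_mul_of_nonneg_left hA hs.le
    have e : s * (w + s⁻¹ * ⟪yk - X, yk - xk⟫ - 1/2 * s⁻¹ * ‖X - yk‖^2)
        = s * w + ⟪yk - X, yk - xk⟫ - 1/2 * ‖X - yk‖^2 := by field_simp
    rw [e] at h; exact h
  have hB' : s * w' ≤ ⟪yk - X, yk - xs⟫ - 1/2 * ‖X - yk‖^2 + s * c := by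
    have h := mul_le_mul_of_nonneg_left hB hs.le
    have e : s * (s⁻¹ * ⟪yk - X, yk - xs⟫ - 1/2 * s⁻¹ * ‖X - yk‖^2 + c)
        = ⟪yk - X, yk - xs⟫ - 1/2 * ‖X - yk‖^2 + s * c := by field_simp
    rw [e] at h; exact h
  have e1 : (t^2 - t) * ⟪yk - X, yk - xk⟫ + t * ⟪yk - X, yk - xs⟫ = ⟪Vm - V', Vm⟫ := by
    rw [← idA, ← idB, inner_add_right, real_inner_smul_left, real_inner_smul_left,
      real_inner_smul_right]
    ring
  have e2 : t^2 * ‖X - yk‖^2 = ‖Vm - V'‖^2 := by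
    rw [← idA, norm_smul, Real.norm_eq_abs, mul_pow, sq_abs, norm_sub_rev X yk]
  have hh := inner_half (Vm - V') Vm
  rw [sub_sub_cancel] at hh
  have h1 := mul_le_mul_of_nonneg_left hA' (show (0:ℝ) ≤ t^2 - t by nlinarith)
  have h2 := mul_le_mul_of_nonneg_left hB' (show (0:ℝ) ≤ t by linarith)
  nlinarith [h1, h2, e1, e2, hh]

set_option maxHeartbeats 1000000 in
/-- The series `∑_{k≥1} k ‖x^{k+1} − x^k‖²` converges. -/
theorem stmt_13 (n : ℕ) (hn : 0 < n) (α σ μ₀ κ : ℝ)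
    (hα : 3 < α) (hσ : 1 / 2 < σ) (hσ1 : σ ≤ 1) (hμ₀ : 0 < μ₀) (hκ : 0 ≤ κ)
    (γ : ℕ → ℝ) (hγpos : ∀ k, 0 < γ k) (hγanti : Antitone γ)
    (μ : ℕ → ℝ)
    (hμ : ∀ k : ℕ, 1 ≤ k →
      μ k = μ₀ / (((k : ℝ) + α - 2) * Real.log ((k : ℝ) + α - 2) ^ σ))
    (x y : ℕ → EuclideanSpace ℝ (Fin n))
    (hy : ∀ k : ℕ,
      y k = x k + ((((k : ℝ) - 1) / ((k : ℝ) + α - 1)) : ℝ) • (x k - x (k - 1)))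
    (xstar : EuclideanSpace ℝ (Fin n)) (W : ℕ → ℝ) (hW : ∀ k, 0 ≤ W k)
    (hA : ∀ k : ℕ, W (k + 1) ≤ W k
      + (μ (k + 1) * γ (k + 1))⁻¹ * ⟪y k - x (k + 1), y k - x k⟫
      - 1 / 2 * (μ (k + 1) * γ (k + 1))⁻¹ * ‖x (k + 1) - y k‖ ^ 2)
    (hB : ∀ k : ℕ, W (k + 1) ≤
      (μ (k + 1) * γ (k + 1))⁻¹ * ⟪y k - x (k + 1), y k - xstar⟫
      - 1 / 2 * (μ (k + 1) * γ (k + 1))⁻¹ * ‖x (k + 1) - y k‖ ^ 2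
      + 2 * κ * μ (k + 1)) :
    Summable (fun k : ℕ => (k : ℝ) * ‖x (k + 1) - x k‖ ^ 2) := by
  have hα1 : (0:ℝ) < α - 1 := by linarith
  have hα1' : (α:ℝ) - 1 ≠ 0 := ne_of_gt hα1
  have hσ0 : (0:ℝ) ≤ σ := by linarith
  -- basic positivity of μ and monotonicity of s_k := μ_k γ_k
  have hμval1 : ∀ m : ℕ, μ (m+1) = μ₀ / (((m:ℝ) + α - 1) * Real.log ((m:ℝ) + α - 1) ^ σ) := by
    intro m
    rw [hμ (m+1) (by omega)]
    have e : ((m+1:ℕ):ℝ) + α - 2 = (m:ℝ) + α - 1 := by push_cast; ring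
    rw [e]
  have hbase1 : ∀ m : ℕ, (1:ℝ) < (m:ℝ) + α - 1 := by
    intro m; have := Nat.cast_nonneg (α := ℝ) m; linarith
  have hlog1 : ∀ m : ℕ, 0 < Real.log ((m:ℝ) + α - 1) := fun m => Real.log_pos (hbase1 m)
  have hden1 : ∀ m : ℕ, 0 < ((m:ℝ) + α - 1) * Real.log ((m:ℝ) + α - 1) ^ σ := by
    intro m
    have h1 := hbase1 m
    have h2 := hlog1 m
    positivity
  have hμpos1 : ∀ m : ℕ, 0 < μ (m+1) := by
    intro m; rw [hμval1 m]; exact div_pos hμ₀ (hden1 m)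
  have hspos : ∀ m : ℕ, 0 < μ (m+1) * γ (m+1) := fun m => mul_pos (hμpos1 m) (hγpos (m+1))
  have hμmono : ∀ m : ℕ, μ (m+2) ≤ μ (m+1) := by
    intro m
    have h1 := hμval1 m
    have h2 := hμval1 (m+1)
    have e : ((m+1:ℕ):ℝ) + α - 1 = (m:ℝ) + α := by push_cast; ring
    rw [e] at h2
    rw [h1, h2]
    have hd1 := hden1 m
    have hbl : (m:ℝ) + α - 1 ≤ (m:ℝ) + α := by linarith
    have hlg : Real.log ((m:ℝ) + α - 1) ≤ Real.log ((m:ℝ) + α) :=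
      Real.log_le_log (by linarith [hbase1 m]) hbl
    have hd2 : ((m:ℝ) + α - 1) * Real.log ((m:ℝ) + α - 1) ^ σ
        ≤ ((m:ℝ) + α) * Real.log ((m:ℝ) + α) ^ σ := by
      apply mul_le_mul hbl (Real.rpow_le_rpow (hlog1 m).le hlg hσ0)
        (Real.rpow_nonneg (hlog1 m).le σ) (by linarith [hbase1 m])
    exact div_le_div_of_nonneg_left hμ₀.le hd1 hd2
  have hsmono : ∀ m : ℕ, μ (m+2) * γ (m+2) ≤ μ (m+1) * γ (m+1) := by
    intro m
    exact mul_le_mul (hμmono m) (hγanti (by omega)) (hγpos (m+2)).le (hμpos1 m).le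
  -- τ m = t_{m+1}, V m = v_{m+1}
  set τ : ℕ → ℝ := fun m => ((m:ℝ) + α - 1) / (α - 1) with hτdef
  set V : ℕ → EuclideanSpace ℝ (Fin n) :=
    fun m => x (m+1) + (((m:ℝ)) / (α - 1)) • (x (m+1) - x m) - xstar with hVdef
  have hτ1 : ∀ m : ℕ, 1 ≤ τ m := by
    intro m
    simp only [hτdef]
    rw [le_div_iff₀ hα1]
    have := Nat.cast_nonneg (α := ℝ) m
    linarith
  have hτ1' : ∀ m : ℕ, τ (m+1) = ((m:ℝ) + α) / (α - 1) := by
    intro m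
    simp only [hτdef]
    push_cast
    ring
  have hmα : ∀ m : ℕ, (0:ℝ) < (m:ℝ) + α := by
    intro m; have := Nat.cast_nonneg (α := ℝ) m; linarith
  have hcβ : ∀ m : ℕ, (((m+1:ℕ):ℝ) - 1) / (((m+1:ℕ):ℝ) + α - 1) = (m:ℝ) / ((m:ℝ) + α) := by
    intro m; push_cast; ring_nf
  have idA : ∀ m : ℕ, τ (m+1) • (y (m+1) - x (m+2)) = V m - V (m+1) := by
    intro m
    rw [hy (m+1)]
    simp only [Nat.add_sub_cancel]
    rw [hcβ m, hτ1' m]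
    simp only [hVdef]
    have h1 : ((m:ℝ) + α) ≠ 0 := ne_of_gt (hmα m)
    push_cast
    match_scalars <;> field_simp <;> ring
  have idB : ∀ m : ℕ, (τ (m+1) - 1) • (y (m+1) - x (m+1)) + (y (m+1) - xstar) = V m := by
    intro m
    rw [hy (m+1)]
    simp only [Nat.add_sub_cancel]
    rw [hcβ m, hτ1' m]
    simp only [hVdef]
    have h1 : ((m:ℝ) + α) ≠ 0 := ne_of_gt (hmα m)
    push_cast
    match_scalars <;> field_simp <;> ring
  have keyM : ∀ m : ℕ,
      τ (m+1)^2 * (μ (m+2) * γ (m+2)) * W (m+2) + 1/2 * ‖V (m+1)‖^2 ≤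
      (τ (m+1)^2 - τ (m+1)) * (μ (m+2) * γ (m+2)) * W (m+1) + 1/2 * ‖V m‖^2
        + τ (m+1) * (μ (m+2) * γ (m+2)) * (2 * κ * μ (m+2)) := by
    intro m
    refine master_aux (τ (m+1)) (μ (m+2) * γ (m+2)) (W (m+1)) (W (m+2)) (2 * κ * μ (m+2))
      (hτ1 (m+1)) (hspos (m+1)) (y (m+1)) (x (m+2)) (x (m+1)) xstar (V m) (V (m+1))
      (idA m) (idB m) ?_ ?_
    · have := hA (m+1); linarith [this]
    · have := hB (m+1); linarith [this]
  -- coefficient comparison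
  set δ : ℝ := (α - 3) / (α - 1)^2 with hδdef
  have hδpos : 0 < δ := by
    rw [hδdef]
    apply div_pos (by linarith) (by positivity)
  have coeff : ∀ m : ℕ, τ (m+1)^2 - τ (m+1) + δ * ((m:ℝ)+1) ≤ τ m^2 := by
    intro m
    have key : τ (m+1)^2 - τ (m+1) + δ * ((m:ℝ)+1) - τ m^2 = -((α-2)^2 / (α-1)^2) := by
      rw [hτ1' m]
      simp only [hτdef, hδdef]
      field_simp
      ring
    have h2 : 0 ≤ (α-2)^2 / (α-1)^2 := by positivity
    linarith
  -- energy sequence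
  set Ee : ℕ → ℝ := fun m => τ m^2 * (μ (m+1) * γ (m+1)) * W (m+1) + 1/2 * ‖V m‖^2 with hEedef
  set G : ℕ → ℝ := fun m => ((m:ℝ)+1) * (μ (m+2) * γ (m+2)) * W (m+1) with hGdef
  set EPS : ℕ → ℝ := fun m => τ (m+1) * (μ (m+2) * γ (m+2)) * (2 * κ * μ (m+2)) with hEPSdef
  have hGnonneg : ∀ m, 0 ≤ G m := by
    intro m
    simp only [hGdef]
    have h1 := hspos (m+1)
    have h2 := hW (m+1)
    have h3 := Nat.cast_nonneg (α := ℝ) m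
    positivity
  have hEenonneg : ∀ m, 0 ≤ Ee m := by
    intro m
    simp only [hEedef]
    have h1 := hspos m
    have h2 := hW (m+1)
    positivity
  have hEPSnonneg : ∀ m, 0 ≤ EPS m := by
    intro m
    simp only [hEPSdef]
    have h1 := hspos (m+1)
    have h2 := hμpos1 (m+1)
    have h3 : 0 < τ (m+1) := lt_of_lt_of_le one_pos (hτ1 (m+1))
    positivity
  have EeStep : ∀ m : ℕ, Ee (m+1) + δ * G m ≤ Ee m + EPS m := by
    intro m
    have hM := keyM m
    have hc := coeff m
    have hW1 := hW (m+1)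
    have hs2 := hspos (m+1)
    have hmono := hsmono m
    have h1 := mul_le_mul_of_nonneg_right hc
      (mul_nonneg hs2.le hW1)
    have h2 := mul_le_mul_of_nonneg_left hmono
      (mul_nonneg (sq_nonneg (τ m)) hW1)
    simp only [hEedef, hGdef, hEPSdef]
    linarith [hM, h1, h2]
  have claim1 : ∀ N : ℕ, Ee N + δ * (∑ m ∈ Finset.range N, G m)
      ≤ Ee 0 + ∑ m ∈ Finset.range N, EPS m := by
    intro N
    induction N with
    | zero => simp
    | succ N ih =>
      rw [Finset.sum_range_succ, Finset.sum_range_succ]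
      have := EeStep N
      linarith
  -- bounding the error terms by a Bertrand series
  have hμval2 : ∀ m : ℕ, μ (m+2) = μ₀ / (((m:ℝ) + α) * Real.log ((m:ℝ) + α) ^ σ) := by
    intro m
    have h := hμval1 (m+1)
    have e : ((m+1:ℕ):ℝ) + α - 1 = (m:ℝ) + α := by push_cast; ring
    rw [e] at h
    exact h
  have hlog2 : ∀ m : ℕ, 0 < Real.log ((m:ℝ) + α) := by
    intro m
    apply Real.log_pos
    have := Nat.cast_nonneg (α := ℝ) m
    linarith
  have hL2 : ∀ m : ℕ, (Real.log ((m:ℝ) + α) ^ σ)^2 = Real.log ((m:ℝ) + α) ^ (2*σ) := by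
    intro m
    rw [← Real.rpow_natCast (Real.log ((m:ℝ) + α) ^ σ) 2, ← Real.rpow_mul (hlog2 m).le]
    norm_num
    rw [mul_comm]
  set maj : ℕ → ℝ := fun m =>
    (2 * κ * μ₀^2 * γ 0 / (α - 1)) * (1 / (((m:ℝ)+2) * Real.log ((m:ℝ)+2) ^ (2*σ))) with hmajdef
  have hlogm2 : ∀ m : ℕ, 0 < Real.log ((m:ℝ)+2) := by
    intro m
    apply Real.log_pos
    have := Nat.cast_nonneg (α := ℝ) m
    linarith
  have hmajnonneg : ∀ m, 0 ≤ maj m := by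
    intro m
    simp only [hmajdef]
    have h1 := hlogm2 m
    have h2 := hγpos 0
    have h3 := Nat.cast_nonneg (α := ℝ) m
    positivity
  have hEPSle : ∀ m, EPS m ≤ maj m := by
    intro m
    have hb := hmα m
    have hl := hlog2 m
    have hEPSeq : EPS m = (2 * κ * μ₀^2 * γ (m+2) / (α - 1))
        * (1 / (((m:ℝ)+α) * Real.log ((m:ℝ)+α) ^ (2*σ))) := by
      simp only [hEPSdef]
      have hLL : Real.log ((m:ℝ)+α) ^ σ * Real.log ((m:ℝ)+α) ^ σ
          = Real.log ((m:ℝ)+α) ^ (2*σ) := by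
        rw [← Real.rpow_add hl]; ring_nf
      rw [hμval2 m, hτ1' m, ← hLL]
      have h1 : ((m:ℝ) + α) ≠ 0 := ne_of_gt hb
      have h2 : Real.log ((m:ℝ)+α) ^ σ ≠ 0 := by
        have := Real.rpow_pos_of_pos hl σ; positivity
      field_simp
    rw [hEPSeq]
    simp only [hmajdef]
    have hm2 : (0:ℝ) < (m:ℝ) + 2 := by positivity
    have hm2a : (m:ℝ) + 2 ≤ (m:ℝ) + α := by linarith
    apply mul_le_mul
    · have hγle : γ (m+2) ≤ γ 0 := hγanti (by omega)
      have h2 := hγpos (m+2)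
      gcongr
    · apply one_div_le_one_div_of_le
      · exact mul_pos hm2 (Real.rpow_pos_of_pos (hlogm2 m) (2*σ))
      · apply mul_le_mul hm2a
          (Real.rpow_le_rpow (hlogm2 m).le (Real.log_le_log hm2 hm2a) (by linarith))
          (Real.rpow_nonneg (hlogm2 m).le _) (by linarith)
    · have h1 := hlog2 m
      positivity
    · have h2 := hγpos 0
      positivity
  have hmajsum : Summable maj := by
    simp only [hmajdef]
    exact (bert (by linarith : (1:ℝ) < 2*σ)).mul_left _
  set Ceps : ℝ := ∑' m, maj m with hCepsdef
  have hEPSsum : ∀ N : ℕ, ∑ m ∈ Finset.range N, EPS m ≤ Ceps := by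
    intro N
    calc ∑ m ∈ Finset.range N, EPS m ≤ ∑ m ∈ Finset.range N, maj m :=
          Finset.sum_le_sum (fun i _ => hEPSle i)
    _ ≤ Ceps := hmajsum.sum_le_tsum _ (fun i _ => hmajnonneg i)
  set C1 : ℝ := (Ee 0 + Ceps) / δ with hC1def
  have SG : ∀ N : ℕ, ∑ m ∈ Finset.range N, G m ≤ C1 := by
    intro N
    rw [hC1def, le_div_iff₀ hδpos]
    have h1 := claim1 N
    have h2 := hEPSsum N
    have h3 := hEenonneg N
    linarith
  have hC1nonneg : 0 ≤ C1 := by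
    have := SG 0
    simpa using this
  -- Step 2 : telescoping with weights (m+α)²
  have hsA : ∀ m : ℕ, (μ (m+2) * γ (m+2)) * W (m+2) ≤ (μ (m+2) * γ (m+2)) * W (m+1)
      + 1/2 * ‖y (m+1) - x (m+1)‖^2 - 1/2 * ‖x (m+2) - x (m+1)‖^2 := by
    intro m
    refine stepA_aux _ _ _ (hspos (m+1)) (y (m+1)) (x (m+2)) (x (m+1)) ?_
    have := hA (m+1)
    linarith [this]
  have hyx : ∀ m : ℕ, ‖y (m+1) - x (m+1)‖^2
      = ((m:ℝ) / ((m:ℝ)+α))^2 * ‖x (m+1) - x m‖^2 := by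
    intro m
    rw [hy (m+1)]
    simp only [Nat.add_sub_cancel]
    rw [hcβ m, add_sub_cancel_left, norm_smul, Real.norm_eq_abs, mul_pow, sq_abs]
  have step2 : ∀ m : ℕ,
      1/2 * ((m:ℝ)+1)^2 * ‖x (m+2) - x (m+1)‖^2
        + (α-1) * ((m:ℝ)+1) * ‖x (m+2) - x (m+1)‖^2
        + ((m:ℝ)+α)^2 * (μ (m+2) * γ (m+2)) * W (m+2)
      ≤ 1/2 * (m:ℝ)^2 * ‖x (m+1) - x m‖^2
        + ((m:ℝ)+α)^2 * (μ (m+2) * γ (m+2)) * W (m+1) := by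
    intro m
    have h := mul_le_mul_of_nonneg_left (hsA m) (sq_nonneg ((m:ℝ)+α))
    rw [hyx m] at h
    have hb : ((m:ℝ)+α)^2 * (((m:ℝ) / ((m:ℝ)+α))^2 * ‖x (m+1) - x m‖^2)
        = (m:ℝ)^2 * ‖x (m+1) - x m‖^2 := by
      have h1 : ((m:ℝ) + α) ≠ 0 := ne_of_gt (hmα m)
      field_simp
    have hpoly : ((m:ℝ)+1)^2 * ‖x (m+2) - x (m+1)‖^2
        + 2*(α-1)*((m:ℝ)+1) * ‖x (m+2) - x (m+1)‖^2
        ≤ ((m:ℝ)+α)^2 * ‖x (m+2) - x (m+1)‖^2 := by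
      nlinarith [mul_nonneg (sq_nonneg (α-1)) (sq_nonneg ‖x (m+2) - x (m+1)‖)]
    nlinarith [h, hb, hpoly]
  set J : ℕ → ℝ := fun m => 1/2 * (m:ℝ)^2 * ‖x (m+1) - x m‖^2
      + ((m:ℝ)+α)^2 * (μ (m+2) * γ (m+2)) * W (m+1) with hJdef
  have hJnonneg : ∀ m, 0 ≤ J m := by
    intro m
    simp only [hJdef]
    have h1 := hspos (m+1)
    have h2 := hW (m+1)
    positivity
  have Jstep : ∀ m : ℕ, J (m+1) + (α-1) * ((m:ℝ)+1) * ‖x (m+2) - x (m+1)‖^2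
      ≤ J m + (2*α+2) * G (m+1) := by
    intro m
    have h2 := step2 m
    have hWm2 := hW (m+2)
    have hs3 := hspos (m+2)
    have hmono := hsmono (m+1)
    have hb1 := mul_le_mul_of_nonneg_right hmono
      (mul_nonneg (sq_nonneg ((m:ℝ)+α)) hWm2)
    have hb2 : (2*((m:ℝ)+α)+1) * ((μ (m+3) * γ (m+3)) * W (m+2))
        ≤ (2*α+2) * (((m:ℝ)+2) * ((μ (m+3) * γ (m+3)) * W (m+2))) := by
      have hm0 := Nat.cast_nonneg (α := ℝ) m
      have hP : 0 ≤ (μ (m+3) * γ (m+3)) * W (m+2) := mul_nonneg (hspos (m+2)).le hWm2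
      have hmP : 0 ≤ (m:ℝ) * ((μ (m+3) * γ (m+3)) * W (m+2)) := mul_nonneg hm0 hP
      nlinarith [hP, hmP]
    simp only [hJdef, hGdef]
    push_cast
    have e1 : ((m:ℕ)+1+1 : ℕ) = m+2 := rfl
    have e2 : ((m:ℕ)+1+2 : ℕ) = m+3 := rfl
    rw [e1, e2]
    nlinarith [h2, hb1, hb2]
  have SG' : ∀ N : ℕ, ∑ m ∈ Finset.range N, G (m+1) ≤ C1 := by
    intro N
    have h1 := SG (N+1)
    rw [Finset.sum_range_succ'] at h1
    have h2 := hGnonneg 0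
    linarith
  have claim2 : ∀ N : ℕ,
      J N + (α-1) * ∑ m ∈ Finset.range N, ((m:ℝ)+1) * ‖x (m+2) - x (m+1)‖^2
      ≤ J 0 + (2*α+2) * ∑ m ∈ Finset.range N, G (m+1) := by
    intro N
    induction N with
    | zero => simp
    | succ N ih =>
      rw [Finset.sum_range_succ, Finset.sum_range_succ]
      have := Jstep N
      nlinarith [this, ih]
  set C2 : ℝ := (J 0 + (2*α+2) * C1) / (α-1) with hC2def
  have hC2nonneg : 0 ≤ C2 := by
    rw [hC2def]
    have h1 := hJnonneg 0
    apply div_nonneg ?_ hα1.le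
    nlinarith [hC1nonneg]
  have final : ∀ N : ℕ, ∑ m ∈ Finset.range N, ((m:ℝ)+1) * ‖x (m+2) - x (m+1)‖^2 ≤ C2 := by
    intro N
    rw [hC2def, le_div_iff₀ hα1]
    have h1 := claim2 N
    have h2 := SG' N
    have h3 := hJnonneg N
    nlinarith [h1, h2, h3]
  apply summable_of_sum_range_le (c := C2)
  · intro k
    positivity
  · intro N
    match N with
    | 0 => simpa using hC2nonneg
    | (M+1) =>
      rw [Finset.sum_range_succ']
      have e0 : ((0:ℕ):ℝ) * ‖x (0 + 1) - x 0‖ ^ 2 = 0 := by simp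
      rw [e0, add_zero]
      have ee : ∀ i : ℕ, ((i+1:ℕ):ℝ) * ‖x (i+1+1) - x (i+1)‖^2
          = ((i:ℝ)+1) * ‖x (i+2) - x (i+1)‖^2 := by
        intro i
        push_cast
        rfl
      calc ∑ i ∈ Finset.range M, ((i+1:ℕ):ℝ) * ‖x (i+1+1) - x (i+1)‖^2
          = ∑ i ∈ Finset.range M, ((i:ℝ)+1) * ‖x (i+2) - x (i+1)‖^2 :=
            Finset.sum_congr rfl (fun i _ => ee i)
        _ ≤ C2 := final M
end
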